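/- arXiv:0905.0579 — 6 statements merged into one kernel-verified Lean document; each statement's English description precedes it below -/
import Mathlib

section
/- Let H be a group with a central element z of order exactly 2 such that every commutator ⁅g,h⁆ = g h g⁻¹ h⁻¹ (for g, h ∈ H) lies in {1, z}, and assume the center Z(H) has finite index in H. Call a homomorphism χ : Z(H) → ℂˣ genuine if χ(z) = −1, and call a finite-dimensional complex representation of H genuine if z acts by −Id. Then for every genuine character χ of Z(H) there exists, up to isomorphism, a unique finite-dimensional irreducible complex representation π(χ) of H whose restriction to Z(H) is a direct sum of copies of χ; moreover every finite-dimensional irreducible genuine complex representation of H is isomorphic to π(χ) for exactly one genuine character χ. Hence χ ↦ π(χ) is a bijection from the set of genuine characters of Z(H) onto the set of isomorphism classes of finite-dimensional irreducible genuine complex representations of H. -/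
/-- A finite-dimensional complex representation of a group `H`. -/
structure FinDimRep (H : Type) [Group H] where
  carrier : Type
  [acg : AddCommGroup carrier]
  [mod : Module ℂ carrier]
  [fd : FiniteDimensional ℂ carrier]
  ρ : Representation ℂ H carrier

attribute [instance] FinDimRep.acg FinDimRep.mod FinDimRep.fd

variable {H : Type} [Group H]

/-- Irreducibility: the space is nonzero and has no proper nonzero invariant subspace. -/
def FinDimRep.IsIrreducible (π : FinDimRep H) : Prop :=
  (⊤ : Submodule ℂ π.carrier) ≠ ⊥ ∧
  ∀ U : Submodule ℂ π.carrier, (∀ g : H, ∀ x ∈ U, π.ρ g x ∈ U) → U = ⊥ ∨ U = ⊤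

/-- The restriction of `π` to the center is a direct sum of copies of the character
`χ`, i.e. every central element `s` acts by the scalar `χ(s)`. -/
def FinDimRep.RestrictsTo (π : FinDimRep H) (χ : Subgroup.center H →* ℂˣ) : Prop :=
  ∀ s : Subgroup.center H,
    π.ρ (s : H) = (χ s : ℂ) • (1 : π.carrier →ₗ[ℂ] π.carrier)

/-- Isomorphism of representations. -/
def FinDimRep.Iso (π π' : FinDimRep H) : Prop :=
  ∃ e : π.carrier ≃ₗ[ℂ] π'.carrier, ∀ (g : H) (x : π.carrier), e (π.ρ g x) = π'.ρ g (e x)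

open scoped commutatorElement

/-!
Schur's lemma makes the center act on an irreducible representation by a character, and an
irreducible subrepresentation of the representation induced from `χ` realizes `π(χ)`.
For uniqueness: a non-central `g` is conjugate to `z g`, so its trace vanishes in every genuine
representation. If `π` and `π'` both have central character `χ`, the center acts trivially on
`Hom(π, π')`, which therefore is a representation of the finite group `H ⧸ Z(H)` whose character
vanishes off the identity; averaging it produces a nonzero intertwiner, an isomorphism by Schur.
-/

open Representation

theorem exists_conj_eq_mul_of_notMem_center {G : Type*} [Group G] {z g : G}
    (hcomm : ∀ a b : G, ⁅a, b⁆ ∈ ({1, z} : Set G)) (hg : g ∉ Subgroup.center G) :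
    ∃ h : G, h * g * h⁻¹ = z * g := by
  obtain ⟨h, hne⟩ : ∃ h : G, h * g ≠ g * h := by
    by_contra! hcon
    exact hg (Subgroup.mem_center_iff.mpr hcon)
  refine ⟨h, ?_⟩
  rcases hcomm h g with h1 | h1
  · exact absurd (commutatorElement_eq_one_iff_mul_comm.mp h1) hne
  · rw [← h1, commutatorElement_def]
    group

namespace Representation

variable {k G V : Type*} [Field k] [Group G] [AddCommGroup V] [Module k V]

theorem character_eq_zero_of_conj_eq_mul [CharZero k] (ρ : Representation k G V) {z g h : G}
    (hz : ρ z = -1) (hconj : h * g * h⁻¹ = z * g) : ρ.character g = 0 := by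
  refine self_eq_neg.mp ?_
  calc ρ.character g = ρ.character (h * g * h⁻¹) := (ρ.char_conj g h).symm
    _ = -ρ.character g := by
      rw [hconj, character, map_mul, hz, neg_one_mul, map_neg]
      rfl

theorem invariants_ne_bot_of_character_eq_zero [CharZero k] [FiniteDimensional k V] [Nontrivial V]
    (ρ : Representation k G V) (S : Subgroup G) [S.Normal] [S.FiniteIndex]
    [IsTrivial (ρ.comp S.subtype)] (hρ : ∀ g ∉ S, ρ.character g = 0) : ρ.invariants ≠ ⊥ := by
  have := Fintype.ofFinite (G ⧸ S)
  have : Invertible (Nat.card (G ⧸ S) : k) :=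
    invertibleOfNonzero (Nat.cast_ne_zero.mpr Nat.card_pos.ne')
  set ρQ := ρ.ofQuotient S
  have hsum : ∑ q, ρQ.character q = Module.finrank k V := by
    rw [Finset.sum_eq_single 1 ?_ (by simp), char_one]
    intro q _ hq
    induction q using QuotientGroup.induction_on with
    | H g => exact hρ g (by simpa [QuotientGroup.eq_one_iff] using hq)
  have hinv : ρQ.invariants = ρ.invariants := by
    ext v
    simp [mem_invariants, ρQ, QuotientGroup.forall_mk]
  intro hbot
  have := card_inv_mul_sum_char_eq_finrank ρQ
  rw [hsum, hinv, hbot, finrank_bot, Nat.cast_zero] at this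
  exact mul_ne_zero (inv_ne_zero (Nat.cast_ne_zero.mpr Nat.card_pos.ne'))
    (Nat.cast_ne_zero.mpr Module.finrank_pos.ne') this

end Representation

namespace FinDimRep

variable {π π' : FinDimRep H} {χ χ' : Subgroup.center H →* ℂˣ}

theorem IsIrreducible.nontrivial (hπ : π.IsIrreducible) : Nontrivial π.carrier :=
  (Submodule.nontrivial_iff ℂ).mp ⟨⟨⊤, ⊥, hπ.1⟩⟩

theorem IsIrreducible.isIrreducible_ρ (hπ : π.IsIrreducible) : π.ρ.IsIrreducible where
  exists_pair_ne := ⟨⊥, ⊤, fun h => hπ.1 (congrArg Subrepresentation.toSubmodule h).symm⟩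
  eq_bot_or_eq_top U := (hπ.2 U.toSubmodule fun g _ hx => U.apply_mem_toSubmodule g hx).imp
    (fun h => Subrepresentation.ext h) (fun h => Subrepresentation.ext h)

theorem IsIrreducible.iso_of_intertwiningMap_ne_zero (hπ : π.IsIrreducible)
    (hπ' : π'.IsIrreducible) (f : π.ρ.IntertwiningMap π'.ρ) (hf : f ≠ 0) : π.Iso π' := by
  have := hπ.isIrreducible_ρ
  have := hπ'.isIrreducible_ρ
  let e := f.ofBijective ((IsIrreducible.bijective_or_eq_zero f).resolve_right hf)
  exact ⟨e.toLinearEquiv, e.isIntertwining⟩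

theorem IsIrreducible.exists_eq_smul_one_of_mem_center (hπ : π.IsIrreducible) {s : H}
    (hs : s ∈ Subgroup.center H) : ∃ c : ℂ, π.ρ s = c • 1 := by
  have := hπ.isIrreducible_ρ
  let f : π.ρ.IntertwiningMap π.ρ := (π.ρ s).intertwiningMap_of_isIntertwiningMap π.ρ π.ρ
    fun g v => by
      rw [← Module.End.mul_apply, ← map_mul, ← Subgroup.mem_center_iff.mp hs g, map_mul,
        Module.End.mul_apply]
  obtain ⟨c, hc⟩ := IsIrreducible.algebraMap_intertwiningMap_bijective_of_isAlgClosed.2 f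
  refine ⟨c, LinearMap.ext fun v => ?_⟩
  simpa [f] using (congrArg (fun φ : π.ρ.IntertwiningMap π.ρ => φ v) hc).symm

theorem IsIrreducible.exists_restrictsTo (hπ : π.IsIrreducible) :
    ∃ χ : Subgroup.center H →* ℂˣ, π.RestrictsTo χ := by
  have := hπ.nontrivial
  choose c hc using fun s : Subgroup.center H => hπ.exists_eq_smul_one_of_mem_center s.2
  have hinj := smul_left_injective ℂ (one_ne_zero (α := Module.End ℂ π.carrier))
  let χ : Subgroup.center H →* ℂ :=
    { toFun := c
      map_one' := hinj <| by simp only [← hc, OneMemClass.coe_one, map_one, one_smul]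
      map_mul' := fun s t => hinj <| by
        dsimp only
        rw [← hc, Subgroup.coe_mul, map_mul, hc, hc, smul_mul_smul_comm, mul_one] }
  exact ⟨χ.toHomUnits, hc⟩

theorem RestrictsTo.comap {σ : FinDimRep H} (h : π.RestrictsTo χ)
    {f : σ.carrier →ₗ[ℂ] π.carrier} (hf : Function.Injective f)
    (hfσ : ∀ (g : H) (x : σ.carrier), f (σ.ρ g x) = π.ρ g (f x)) : σ.RestrictsTo χ :=
  fun s => LinearMap.ext fun x => hf <| by simp [hfσ, h s]

theorem RestrictsTo.unique [Nontrivial π.carrier] (h : π.RestrictsTo χ) (h' : π.RestrictsTo χ') :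
    χ = χ' :=
  MonoidHom.ext fun s => Units.ext <|
    smul_left_injective ℂ (one_ne_zero (α := Module.End ℂ π.carrier)) ((h s).symm.trans (h' s))

theorem RestrictsTo.ρ_eq_neg_one_iff [Nontrivial π.carrier] (h : π.RestrictsTo χ) {z : H}
    (hz : z ∈ Subgroup.center H) : π.ρ z = -1 ↔ χ ⟨z, hz⟩ = -1 := by
  have hinj := smul_left_injective ℂ (one_ne_zero (α := Module.End ℂ π.carrier))
  rw [show π.ρ z = _ from h ⟨z, hz⟩, ← neg_one_smul ℂ (1 : Module.End ℂ π.carrier), hinj.eq_iff,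
    Units.ext_iff, Units.val_neg, Units.val_one]

theorem isTrivial_linHom_comp_center (h : π.RestrictsTo χ) (h' : π'.RestrictsTo χ) :
    IsTrivial ((linHom π.ρ π'.ρ).comp (Subgroup.center H).subtype) where
  out s := by
    have hinv : π.ρ (s : H)⁻¹ = ((χ s⁻¹ : ℂˣ) : ℂ) • 1 := h s⁻¹
    ext S x
    simp [linHom_apply, hinv, h' s]

theorem IsIrreducible.iso_of_restrictsTo [(Subgroup.center H).FiniteIndex] {z : H}
    (hcomm : ∀ a b : H, ⁅a, b⁆ ∈ ({1, z} : Set H)) (hz : z ∈ Subgroup.center H)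
    (hχ : χ ⟨z, hz⟩ = -1) (hπ : π.IsIrreducible) (hπ' : π'.IsIrreducible)
    (h : π.RestrictsTo χ) (h' : π'.RestrictsTo χ) : π.Iso π' := by
  have := hπ.nontrivial
  have := hπ'.nontrivial
  have := isTrivial_linHom_comp_center h h'
  have hne := invariants_ne_bot_of_character_eq_zero (linHom π.ρ π'.ρ) (Subgroup.center H)
    fun g hg => by
      obtain ⟨a, ha⟩ := exists_conj_eq_mul_of_notMem_center hcomm hg
      rw [char_linHom, character_eq_zero_of_conj_eq_mul π'.ρ ((h'.ρ_eq_neg_one_iff hz).mpr hχ) ha,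
        mul_zero]
  obtain ⟨S, hS, hS0⟩ := Submodule.exists_mem_ne_zero_of_ne_bot hne
  exact hπ.iso_of_intertwiningMap_ne_zero hπ' (invariantsEquivIntertwiningMap _ _ ⟨S, hS⟩)
    (by simpa using hS0)

theorem exists_isIrreducible_injective_intertwining (π : FinDimRep H) [Nontrivial π.carrier] :
    ∃ (σ : FinDimRep H) (f : σ.carrier →ₗ[ℂ] π.carrier), σ.IsIrreducible ∧
      Function.Injective f ∧ ∀ (g : H) (x : σ.carrier), f (σ.ρ g x) = π.ρ g (f x) := by
  by_cases hπ : π.IsIrreducible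
  · exact ⟨π, LinearMap.id, hπ, Function.injective_id, fun _ _ => rfl⟩
  obtain ⟨U, hU, hbot, htop⟩ : ∃ U : Submodule ℂ π.carrier,
      (∀ (g : H), ∀ x ∈ U, π.ρ g x ∈ U) ∧ U ≠ ⊥ ∧ U ≠ ⊤ := by
    by_contra! h
    exact hπ ⟨top_ne_bot, fun U hU => or_iff_not_imp_left.mpr (h U hU)⟩
  have := Submodule.nontrivial_iff_ne_bot.mpr hbot
  let πU : FinDimRep H :=
    ⟨U, (⟨U, fun g _ hx => hU g _ hx⟩ : Subrepresentation π.ρ).toRepresentation⟩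
  obtain ⟨σ, f, hσ, hf, hfσ⟩ := exists_isIrreducible_injective_intertwining πU
  exact ⟨σ, U.subtype ∘ₗ f, hσ, U.injective_subtype.comp hf,
    fun g x => congrArg Subtype.val (hfσ g x)⟩
termination_by Module.finrank ℂ π.carrier
decreasing_by exact Submodule.finrank_lt htop

abbrev inducedSpace (χ : Subgroup.center H →* ℂˣ) : Submodule ℂ (H → ℂ) :=
  coindV (Subgroup.center H).subtype ((ofDistribMulAction ℂ ℂˣ ℂ).comp χ)

theorem mem_inducedSpace {f : H → ℂ} :
    f ∈ inducedSpace χ ↔ ∀ (s : Subgroup.center H) (g : H), f (s * g) = χ s * f g := by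
  simp [Units.smul_def]

instance [(Subgroup.center H).FiniteIndex] : FiniteDimensional ℂ (inducedSpace χ) := by
  let ev : inducedSpace χ →ₗ[ℂ] (H ⧸ Subgroup.center H → ℂ) :=
    LinearMap.funLeft ℂ ℂ Quotient.out ∘ₗ (inducedSpace χ).subtype
  refine FiniteDimensional.of_injective ev ((injective_iff_map_eq_zero ev).mpr ?_)
  intro f hf
  ext g
  obtain ⟨s, hs⟩ := QuotientGroup.mk_out_eq_mul (Subgroup.center H) g
  have hout : f.1 (QuotientGroup.mk g : H ⧸ Subgroup.center H).out = 0 := congrFun hf _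
  rw [hs, Subgroup.mem_center_iff.mp s.2 g, mem_inducedSpace.mp f.2] at hout
  simpa using hout

instance : Nontrivial (inducedSpace χ) := by
  classical
  let f₀ : H → ℂ := fun g => if hg : g ∈ Subgroup.center H then χ ⟨g, hg⟩ else 0
  have hf₀ : f₀ ∈ inducedSpace χ := by
    refine mem_inducedSpace.mpr fun s g => ?_
    by_cases hg : g ∈ Subgroup.center H
    · simp only [f₀, hg, mul_mem s.2 hg, dite_true, ← Units.val_mul, ← map_mul]
      rfl
    · simp [f₀, hg, (Subgroup.mul_mem_cancel_left _ s.2).not.mpr hg]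
  refine ⟨⟨⟨f₀, hf₀⟩, 0, fun h => ?_⟩⟩
  simpa [f₀] using congrFun (congrArg Subtype.val h) 1

noncomputable def induced (χ : Subgroup.center H →* ℂˣ) [(Subgroup.center H).FiniteIndex] :
    FinDimRep H :=
  ⟨inducedSpace χ, coind (Subgroup.center H).subtype ((ofDistribMulAction ℂ ℂˣ ℂ).comp χ)⟩

theorem induced_restrictsTo [(Subgroup.center H).FiniteIndex] : (induced χ).RestrictsTo χ := by
  intro s
  refine LinearMap.ext fun (f : inducedSpace χ) => Subtype.ext <| funext fun g => ?_
  change f.1 (g * s) = χ s * f.1 g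
  rw [Subgroup.mem_center_iff.mp s.2 g, mem_inducedSpace.mp f.2]

theorem exists_isIrreducible_restrictsTo [(Subgroup.center H).FiniteIndex]
    (χ : Subgroup.center H →* ℂˣ) : ∃ π : FinDimRep H, π.IsIrreducible ∧ π.RestrictsTo χ := by
  have : Nontrivial (induced χ).carrier := inferInstanceAs (Nontrivial (inducedSpace χ))
  obtain ⟨σ, f, hσ, hf, hfσ⟩ := (induced χ).exists_isIrreducible_injective_intertwining
  exact ⟨σ, hσ, induced_restrictsTo.comap hf hfσ⟩

end FinDimRep

theorem genuine_characters_biject_with_genuine_irreducibles_general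
    (H : Type) [Group H] (z : H) (hz : z ∈ Subgroup.center H)
    (hcomm : ∀ g h : H, ⁅g, h⁆ ∈ ({1, z} : Set H))
    (hfin : (Subgroup.center H).FiniteIndex) :
    -- existence and uniqueness up to isomorphism of `π(χ)`
    (∀ χ : Subgroup.center H →* ℂˣ, χ ⟨z, hz⟩ = -1 →
      ∃ π : FinDimRep H, π.IsIrreducible ∧ π.RestrictsTo χ ∧
        ∀ π' : FinDimRep H, π'.IsIrreducible → π'.RestrictsTo χ → π.Iso π') ∧
    -- every irreducible genuine representation restricts to exactly one genuine character
    (∀ π : FinDimRep H, π.IsIrreducible →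
      π.ρ z = -(1 : π.carrier →ₗ[ℂ] π.carrier) →
      ∃! χ : Subgroup.center H →* ℂˣ, χ ⟨z, hz⟩ = -1 ∧ π.RestrictsTo χ) ∧
    -- `χ ↦ π(χ)` is injective on isomorphism classes
    (∀ χ χ' : Subgroup.center H →* ℂˣ, χ ⟨z, hz⟩ = -1 → χ' ⟨z, hz⟩ = -1 →
      ∀ π π' : FinDimRep H, π.IsIrreducible → π.RestrictsTo χ →
        π'.IsIrreducible → π'.RestrictsTo χ' → π.Iso π' → χ = χ') := by
  have := hfin
  refine ⟨fun χ hχ => ?_, fun π hπ hzπ => ?_, ?_⟩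
  · obtain ⟨π, hπ, h⟩ := FinDimRep.exists_isIrreducible_restrictsTo χ
    exact ⟨π, hπ, h, fun π' hπ' h' => hπ.iso_of_restrictsTo hcomm hz hχ hπ' h h'⟩
  · have := hπ.nontrivial
    obtain ⟨χ, h⟩ := hπ.exists_restrictsTo
    exact ⟨χ, ⟨(h.ρ_eq_neg_one_iff hz).mp hzπ, h⟩, fun χ' hχ' => hχ'.2.unique h⟩
  · rintro χ χ' - - π π' hπ h - h' ⟨e, he⟩
    have := hπ.nontrivial
    exact h.unique (h'.comap e.injective he)

/-- **Lemma 5.1** of the paper. Let `H` be a group with a central element `z` of order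
exactly `2`, all commutators lying in `{1, z}`, and center of finite index. Then for
every genuine character `χ` of `Z(H)` (i.e. `χ(z) = −1`) there is an irreducible
finite-dimensional representation `π(χ)` of `H`, unique up to isomorphism, whose
restriction to `Z(H)` is a multiple of `χ`; every irreducible genuine representation
(i.e. one where `z` acts by `−Id`) restricts to exactly one genuine character; and the
assignment `χ ↦ π(χ)` is injective up to isomorphism.  Together these say that
`χ ↦ π(χ)` is a bijection from genuine characters of `Z(H)` onto isomorphism classes
of irreducible genuine representations of `H`. -/
theorem genuine_characters_biject_with_genuine_irreducibles
    (H : Type) [Group H] (z : H) (hz : z ∈ Subgroup.center H)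
    (hz2 : orderOf z = 2)
    (hcomm : ∀ g h : H, ⁅g, h⁆ ∈ ({1, z} : Set H))
    (hfin : (Subgroup.center H).FiniteIndex) :
    -- existence and uniqueness up to isomorphism of `π(χ)`
    (∀ χ : Subgroup.center H →* ℂˣ, χ ⟨z, hz⟩ = -1 →
      ∃ π : FinDimRep H, π.IsIrreducible ∧ π.RestrictsTo χ ∧
        ∀ π' : FinDimRep H, π'.IsIrreducible → π'.RestrictsTo χ → π.Iso π') ∧
    -- every irreducible genuine representation restricts to exactly one genuine character
    (∀ π : FinDimRep H, π.IsIrreducible →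
      π.ρ z = -(1 : π.carrier →ₗ[ℂ] π.carrier) →
      ∃! χ : Subgroup.center H →* ℂˣ, χ ⟨z, hz⟩ = -1 ∧ π.RestrictsTo χ) ∧
    -- `χ ↦ π(χ)` is injective on isomorphism classes
    (∀ χ χ' : Subgroup.center H →* ℂˣ, χ ⟨z, hz⟩ = -1 → χ' ⟨z, hz⟩ = -1 →
      ∀ π π' : FinDimRep H, π.IsIrreducible → π.RestrictsTo χ →
        π'.IsIrreducible → π'.RestrictsTo χ' → π.Iso π' → χ = χ') :=
  genuine_characters_biject_with_genuine_irreducibles_general H z hz hcomm hfin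
end

section
/- For all w, x, y ∈ W, setting v = x⁻¹w⁻¹xy, the element w x λ_v lies in the same Weyl chamber as w x λ_y, and w x λ_v − x λ_y ∈ R. Consequently, the cross action satisfies the explicit formula w · (x λ_y) = w x λ_{x⁻¹ w⁻¹ x y}. -/
/-- A reduced crystallographic root system in a real vector space `V`:
a finite set of roots `Δ`, with a coroot `α∨ ∈ V*` for each root `α`. -/
structure RootSystemData (V : Type*) [AddCommGroup V] [Module ℝ V] where
  Δ : Set V
  coroot : V → Module.Dual ℝ V
  finite : Δ.Finite
  pairing_int : ∀ α ∈ Δ, ∀ β ∈ Δ, ∃ n : ℤ, coroot β α = (n : ℝ)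
  pairing_self : ∀ α ∈ Δ, coroot α α = 2
  reflect_mem : ∀ α ∈ Δ, ∀ β ∈ Δ, β - coroot α β • α ∈ Δ
  reduced : ∀ α ∈ Δ, ∀ t : ℝ, t • α ∈ Δ → t = 1 ∨ t = -1
  neg_mem : ∀ α ∈ Δ, -α ∈ Δ
  coroot_neg : ∀ α ∈ Δ, coroot (-α) = - coroot α

variable {V : Type*} [AddCommGroup V] [Module ℝ V]

/-- The root lattice `R`: the ℤ-span of the roots. -/
def RootSystemData.rootLattice (P : RootSystemData V) : AddSubgroup V :=
  AddSubgroup.closure P.Δ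

/-- The Weyl group `W ⊆ GL(V)`, generated by the reflections `s_α`. -/
def RootSystemData.weylGroup (P : RootSystemData V) : Subgroup (V ≃ₗ[ℝ] V) :=
  Subgroup.closure {w | ∃ α ∈ P.Δ, ∀ x : V, w x = x - P.coroot α x • α}

/-- `x` is regular: `⟨x, α∨⟩ ≠ 0` for all roots `α`. -/
def RootSystemData.IsRegular (P : RootSystemData V) (x : V) : Prop :=
  ∀ α ∈ P.Δ, P.coroot α x ≠ 0

/-- Two (regular) elements lie in the same Weyl chamber: for each root,
the pairings have the same sign. -/
def RootSystemData.SameChamber (P : RootSystemData V) (x y : V) : Prop :=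
  ∀ α ∈ P.Δ, (0 < P.coroot α x ↔ 0 < P.coroot α y)

/-- `x` is dominant with respect to the positive system `Δplus`. -/
def RootSystemData.IsDominant (P : RootSystemData V) (Δplus : Set V) (x : V) : Prop :=
  ∀ α ∈ Δplus, 0 ≤ P.coroot α x

/-- `Δplus` is a system of positive roots. -/
def RootSystemData.IsPositiveSystem (P : RootSystemData V) (Δplus : Set V) : Prop :=
  Δplus ⊆ P.Δ ∧ (∀ α ∈ P.Δ, (α ∈ Δplus ↔ -α ∉ Δplus)) ∧
    (∀ α ∈ Δplus, ∀ β ∈ Δplus, α + β ∈ P.Δ → α + β ∈ Δplus)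

/-- The set `Wλ₀ + R`. -/
def RootSystemData.wOrbitLat (P : RootSystemData V) (l0 : V) : Set V :=
  {x | ∃ w ∈ P.weylGroup, ∃ r ∈ P.rootLattice, x = w l0 + r}

/-- `Δ` is simply laced: pairings of nonproportional roots lie in `{-1,0,1}`. -/
def RootSystemData.SimplyLaced (P : RootSystemData V) : Prop :=
  ∀ α ∈ P.Δ, ∀ β ∈ P.Δ, α ≠ β → α ≠ -β → P.coroot β α ∈ ({-1, 0, 1} : Set ℝ)

/-- The set of roots integral on `l`. -/
def RootSystemData.integralRoots (P : RootSystemData V) (l : V) : Set V :=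
  {α | α ∈ P.Δ ∧ ∃ n : ℤ, P.coroot α l = (n : ℝ)}


namespace CAux

lemma mulApply (e₁ e₂ : V ≃ₗ[ℝ] V) (x : V) : (e₁ * e₂) x = e₁ (e₂ x) := rfl
lemma oneApply (x : V) : (1 : V ≃ₗ[ℝ] V) x = x := rfl
lemma invApply (e : V ≃ₗ[ℝ] V) (x : V) : e⁻¹ (e x) = x := by
  rw [← mulApply, inv_mul_cancel, oneApply]

def rmap (P : RootSystemData V) (α : V) : V →ₗ[ℝ] V :=
  LinearMap.id - (LinearMap.toSpanSingleton ℝ V α) ∘ₗ (P.coroot α)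

lemma rmap_apply (P : RootSystemData V) (α x : V) :
    rmap P α x = x - P.coroot α x • α := rfl

lemma rmap_invol (P : RootSystemData V) {α : V} (h2 : P.coroot α α = 2) :
    Function.Involutive (rmap P α) := by
  intro x
  have hc : P.coroot α (x - P.coroot α x • α) = - P.coroot α x := by
    simp [map_sub, map_smul, h2]; ring
  rw [rmap_apply, rmap_apply, hc, neg_smul, sub_neg_eq_add, sub_add_cancel]

def requiv (P : RootSystemData V) (α : V) (h2 : P.coroot α α = 2) : V ≃ₗ[ℝ] V :=
  LinearEquiv.ofInvolutive (rmap P α) (rmap_invol P h2)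

lemma requiv_apply (P : RootSystemData V) (α : V) (h2 : P.coroot α α = 2) (x : V) :
    requiv P α h2 x = x - P.coroot α x • α := rfl

lemma requiv_mem (P : RootSystemData V) {α : V} (hα : α ∈ P.Δ) :
    requiv P α (P.pairing_self α hα) ∈ P.weylGroup :=
  Subgroup.subset_closure ⟨α, hα, fun _ => rfl⟩


/-- the span of the roots -/
def rspan (P : RootSystemData V) : Submodule ℝ V := Submodule.span ℝ P.Δ

lemma root_ne_zero (P : RootSystemData V) {α : V} (hα : α ∈ P.Δ) : α ≠ 0 := by
  intro h
  have := P.pairing_self α hα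
  rw [h] at this
  simp at this

lemma wMapsRoot (P : RootSystemData V) {g : V ≃ₗ[ℝ] V} (hg : g ∈ P.weylGroup) :
    ∀ δ ∈ P.Δ, g δ ∈ P.Δ := by
  refine Subgroup.closure_induction (p := fun g _ => ∀ δ ∈ P.Δ, g δ ∈ P.Δ)
    ?_ ?_ ?_ ?_ hg
  · rintro w ⟨α, hα, hw⟩ δ hδ
    rw [hw]
    exact P.reflect_mem α hα δ hδ
  · intro δ hδ; exact hδ
  · intro a b _ _ ha hb δ hδ
    rw [mulApply]; exact ha _ (hb _ hδ)
  · intro a _ ha δ hδ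
    -- use finiteness: a restricted to Δ is injective, hence surjective
    have hmaps : Set.MapsTo a P.Δ P.Δ := fun x hx => ha x hx
    have hinj : Set.InjOn a P.Δ := fun x _ y _ h => a.injective h
    have hbij := (P.finite.injOn_iff_bijOn_of_mapsTo hmaps).mp hinj
    obtain ⟨δ₀, hδ₀, hδe⟩ := hbij.surjOn hδ
    have : a⁻¹ δ = δ₀ := by rw [← hδe, invApply]
    rw [this]; exact hδ₀

lemma wFixModSpan (P : RootSystemData V) {g : V ≃ₗ[ℝ] V} (hg : g ∈ P.weylGroup) :
    ∀ x : V, g x - x ∈ rspan P := by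
  refine Subgroup.closure_induction (p := fun g _ => ∀ x : V, g x - x ∈ rspan P)
    ?_ ?_ ?_ ?_ hg
  · rintro w ⟨α, hα, hw⟩ x
    rw [hw]
    have : x - P.coroot α x • α - x = -(P.coroot α x • α) := by abel
    rw [this]
    exact neg_mem (Submodule.smul_mem _ _ (Submodule.subset_span hα))
  · intro x; simpa using zero_mem (rspan P)
  · intro a b _ _ ha hb x
    rw [mulApply]
    have : a (b x) - x = (a (b x) - b x) + (b x - x) := by abel
    rw [this]
    exact add_mem (ha _) (hb _)
  · intro a _ ha x
    have h1 := ha (a⁻¹ x)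
    rw [← mulApply, mul_inv_cancel, oneApply] at h1
    have : a⁻¹ x - x = -(x - a⁻¹ x) := by abel
    rw [this]
    exact neg_mem h1

lemma latticeLeSpan (P : RootSystemData V) : ∀ r ∈ P.rootLattice, r ∈ rspan P := by
  intro r hr
  refine AddSubgroup.closure_induction (p := fun r _ => r ∈ rspan P) ?_ ?_ ?_ ?_ hr
  · intro x hx; exact Submodule.subset_span hx
  · exact zero_mem _
  · intro a b _ _ ha hb; exact add_mem ha hb
  · intro a _ ha; exact neg_mem ha

lemma mapsRootLattice (P : RootSystemData V) {g : V ≃ₗ[ℝ] V}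
    (hmaps : ∀ δ ∈ P.Δ, g δ ∈ P.Δ) : ∀ r ∈ P.rootLattice, g r ∈ P.rootLattice := by
  intro r hr
  refine AddSubgroup.closure_induction (p := fun r _ => g r ∈ P.rootLattice) ?_ ?_ ?_ ?_ hr
  · intro x hx; exact AddSubgroup.subset_closure (hmaps x hx)
  · simpa using zero_mem P.rootLattice
  · intro a b _ _ ha hb; rw [map_add]; exact add_mem ha hb
  · intro a _ ha; rw [map_neg]; exact neg_mem ha

lemma wMapsLattice (P : RootSystemData V) {g : V ≃ₗ[ℝ] V} (hg : g ∈ P.weylGroup) :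
    ∀ r ∈ P.rootLattice, g r ∈ P.rootLattice :=
  mapsRootLattice P (wMapsRoot P hg)

lemma dompos (P : RootSystemData V) {Δplus : Set V} (hpos : P.IsPositiveSystem Δplus)
    {μ : V} (hregμ : P.IsRegular μ) (hdomμ : P.IsDominant Δplus μ) :
    ∀ δ ∈ P.Δ, (0 < P.coroot δ μ ↔ δ ∈ Δplus) := by
  intro δ hδ
  constructor
  · intro hlt
    by_contra hnot
    have hneg : -δ ∈ Δplus := by
      by_contra hnn
      exact hnot ((hpos.2.1 δ hδ).mpr hnn)
    have h1 : 0 ≤ P.coroot (-δ) μ := hdomμ _ hneg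
    rw [P.coroot_neg δ hδ] at h1
    simp only [LinearMap.neg_apply] at h1
    linarith
  · intro hp
    have h1 : 0 ≤ P.coroot δ μ := hdomμ _ hp
    have h2 : P.coroot δ μ ≠ 0 := hregμ δ hδ
    exact lt_of_le_of_ne h1 (Ne.symm h2)

section Key

variable (P : RootSystemData V) (δ β : V)

/-- the root `s_β δ` -/
def sroot : V := rmap P β δ

lemma sroot_mem {δ β : V} (hδ : δ ∈ P.Δ) (hβ : β ∈ P.Δ) : sroot P δ β ∈ P.Δ :=
  P.reflect_mem β hβ δ hδ

/-- discrepancy functional -/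
def tphi : V →ₗ[ℝ] ℝ := P.coroot (sroot P δ β) - (P.coroot δ) ∘ₗ (rmap P β)

lemma tphi_apply (x : V) :
    tphi P δ β x = P.coroot (sroot P δ β) x - P.coroot δ (rmap P β x) := rfl

/-- the translation-like element -/
def tauE {δ β : V} (hδ : δ ∈ P.Δ) (hβ : β ∈ P.Δ) : V ≃ₗ[ℝ] V :=
  requiv P β (P.pairing_self β hβ) * requiv P δ (P.pairing_self δ hδ) *
    requiv P β (P.pairing_self β hβ) *
    requiv P (sroot P δ β) (P.pairing_self _ (sroot_mem P hδ hβ))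

lemma tauE_mem {δ β : V} (hδ : δ ∈ P.Δ) (hβ : β ∈ P.Δ) : tauE P hδ hβ ∈ P.weylGroup := by
  unfold tauE
  exact mul_mem (mul_mem (mul_mem (requiv_mem P hβ) (requiv_mem P hδ)) (requiv_mem P hβ))
    (requiv_mem P (sroot_mem P hδ hβ))

lemma sβ_sroot {δ β : V} (hβ : β ∈ P.Δ) :
    requiv P β (P.pairing_self β hβ) (sroot P δ β) = δ :=
  rmap_invol P (P.pairing_self β hβ) δ

lemma tauE_apply {δ β : V} (hδ : δ ∈ P.Δ) (hβ : β ∈ P.Δ) (x : V) :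
    tauE P hδ hβ x = x + tphi P δ β x • sroot P δ β := by
  set γ := sroot P δ β with hγ
  have h2β := P.pairing_self β hβ
  have h2δ := P.pairing_self δ hδ
  have h2γ := P.pairing_self _ (sroot_mem P hδ hβ)
  have step0 : tauE P hδ hβ x =
      requiv P β h2β (requiv P δ h2δ (requiv P β h2β (requiv P γ h2γ x))) := rfl
  have e1 : requiv P γ h2γ x = x - P.coroot γ x • γ := requiv_apply _ _ _ _
  have e2 : requiv P β h2β (x - P.coroot γ x • γ)
      = requiv P β h2β x - P.coroot γ x • δ := by
    rw [map_sub, map_smul, sβ_sroot P hβ]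
  have e3 : requiv P δ h2δ (requiv P β h2β x - P.coroot γ x • δ)
      = requiv P δ h2δ (requiv P β h2β x) + P.coroot γ x • δ := by
    rw [map_sub, map_smul]
    have hd : requiv P δ h2δ δ = -δ := by
      rw [requiv_apply, h2δ]
      module
    rw [hd, smul_neg]
    abel
  have e4 : requiv P β h2β (requiv P δ h2δ (requiv P β h2β x) + P.coroot γ x • δ)
      = requiv P β h2β (requiv P δ h2δ (requiv P β h2β x)) + P.coroot γ x • γ := by
    rw [map_add, map_smul]
    rfl
  have e5 : requiv P β h2β (requiv P δ h2δ (requiv P β h2β x))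
      = x - P.coroot δ (rmap P β x) • γ := by
    have h6 : requiv P δ h2δ (requiv P β h2β x)
        = requiv P β h2β x - P.coroot δ (rmap P β x) • δ := by
      rw [requiv_apply]; rfl
    rw [h6, map_sub, map_smul]
    have hinv : requiv P β h2β (requiv P β h2β x) = x := rmap_invol P h2β x
    rw [hinv]
    have h7 : requiv P β h2β δ = γ := rfl
    rw [h7]
  rw [step0, e1, e2, e3, e4, e5, tphi_apply]
  module

lemma tphi_sroot {δ β : V} (hδ : δ ∈ P.Δ) (hβ : β ∈ P.Δ) :
    tphi P δ β (sroot P δ β) = 0 := by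
  rw [tphi_apply]
  have h1 : P.coroot (sroot P δ β) (sroot P δ β) = 2 :=
    P.pairing_self _ (sroot_mem P hδ hβ)
  have h2 : rmap P β (sroot P δ β) = δ := rmap_invol P (P.pairing_self β hβ) δ
  rw [h1, h2, P.pairing_self δ hδ]
  ring

lemma tauE_pow {δ β : V} (hδ : δ ∈ P.Δ) (hβ : β ∈ P.Δ) (n : ℕ) :
    ∀ x : V, (tauE P hδ hβ ^ n) x = x + ((n : ℝ) * tphi P δ β x) • sroot P δ β := by
  induction n with
  | zero => intro x; simp [oneApply]
  | succ n ih =>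
    intro x
    have hps : tauE P hδ hβ ^ (n + 1) = tauE P hδ hβ ^ n * tauE P hδ hβ := pow_succ _ _
    rw [hps, mulApply, tauE_apply P hδ hβ, ih]
    have hphi : tphi P δ β (x + tphi P δ β x • sroot P δ β) = tphi P δ β x := by
      rw [map_add, map_smul, tphi_sroot P hδ hβ]
      simp
    rw [hphi]
    push_cast
    module

lemma tphi_root_zero {δ β : V} (hδ : δ ∈ P.Δ) (hβ : β ∈ P.Δ)
    (δ' : V) (hδ' : δ' ∈ P.Δ) : tphi P δ β δ' = 0 := by
  classical
  have hfin : Finite P.Δ.Elem := P.finite.to_subtype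
  have hmem : ∀ n : ℕ, (tauE P hδ hβ ^ n) δ' ∈ P.Δ := by
    intro n
    exact wMapsRoot P (pow_mem (tauE_mem P hδ hβ) n) δ' hδ'
  obtain ⟨n, m, hnm, heq⟩ :=
    Finite.exists_ne_map_eq_of_infinite (fun n : ℕ => (⟨(tauE P hδ hβ ^ n) δ', hmem n⟩ : P.Δ.Elem))
  have heq' : ((n : ℝ) * tphi P δ β δ') • sroot P δ β
      = ((m : ℝ) * tphi P δ β δ') • sroot P δ β := by
    have h9 := congrArg Subtype.val heq
    simp only [tauE_pow P hδ hβ] at h9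
    exact add_left_cancel h9
  have hz : (((n : ℝ) - (m : ℝ)) * tphi P δ β δ') • sroot P δ β = 0 := by
    rw [sub_mul, sub_smul, heq', sub_self]
  rcases smul_eq_zero.mp hz with h | h
  · rcases mul_eq_zero.mp h with h' | h'
    · exfalso
      have h10 : (n : ℝ) = (m : ℝ) := by linarith [sub_eq_zero.mp h']
      exact hnm (Nat.cast_injective h10)
    · exact h'
  · exact absurd h (root_ne_zero P (sroot_mem P hδ hβ))

lemma tphi_span_zero {δ β : V} (hδ : δ ∈ P.Δ) (hβ : β ∈ P.Δ)
    (r : V) (hr : r ∈ rspan P) : tphi P δ β r = 0 := by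
  have hle : rspan P ≤ LinearMap.ker (tphi P δ β) := by
    rw [rspan, Submodule.span_le]
    intro z hz
    exact tphi_root_zero P hδ hβ z hz
  exact hle hr

end Key

section Transport

variable (P : RootSystemData V) (l0 : V)

/-- affine subspace condition -/
def Aff (x : V) : Prop := x - l0 ∈ rspan P

lemma aff_w {g : V ≃ₗ[ℝ] V} (hg : g ∈ P.weylGroup) {x : V} (hx : Aff P l0 x) :
    Aff P l0 (g x) := by
  have h1 := wFixModSpan P hg x
  have : g x - l0 = (g x - x) + (x - l0) := by abel
  rw [Aff, this]
  exact add_mem h1 hx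

lemma transport
    (hH : ∀ δ ∈ P.Δ, ∀ β ∈ P.Δ, tphi P δ β l0 = 0) :
    ∀ g ∈ P.weylGroup,
      (∀ δ ∈ P.Δ, ∃ δ' ∈ P.Δ, ∀ lv : V, Aff P l0 lv → P.coroot δ (g lv) = P.coroot δ' lv) ∧
      (∀ δ' ∈ P.Δ, ∃ δ ∈ P.Δ, ∀ lv : V, Aff P l0 lv → P.coroot δ (g lv) = P.coroot δ' lv) := by
  intro g hg
  refine Subgroup.closure_induction (p := fun g _ =>
      (∀ δ ∈ P.Δ, ∃ δ' ∈ P.Δ, ∀ lv : V, Aff P l0 lv → P.coroot δ (g lv) = P.coroot δ' lv) ∧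
      (∀ δ' ∈ P.Δ, ∃ δ ∈ P.Δ, ∀ lv : V, Aff P l0 lv → P.coroot δ (g lv) = P.coroot δ' lv))
    ?_ ?_ ?_ ?_ hg
  · rintro w ⟨α, hα, hw⟩
    have key : ∀ δ ∈ P.Δ, ∀ lv : V, Aff P l0 lv →
        P.coroot δ (w lv) = P.coroot (sroot P δ α) lv := by
      intro δ hδ lv hlv
      have h1 : w lv = rmap P α lv := hw lv
      have h2 : tphi P δ α lv = 0 := by
        have h3 : tphi P δ α lv = tphi P δ α l0 + tphi P δ α (lv - l0) := by
          rw [← map_add]; congr 1; abel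
        rw [h3, hH δ hδ α hα, tphi_span_zero P hδ hα (lv - l0) hlv]
        ring
      have h4 := tphi_apply P δ α lv
      rw [h2] at h4
      rw [h1]
      linarith [h4]
    constructor
    · intro δ hδ
      exact ⟨sroot P δ α, sroot_mem P hδ hα, key δ hδ⟩
    · intro δ' hδ'
      refine ⟨sroot P δ' α, sroot_mem P hδ' hα, ?_⟩
      intro lv hlv
      have h5 := key (sroot P δ' α) (sroot_mem P hδ' hα) lv hlv
      have h6 : sroot P (sroot P δ' α) α = δ' :=
        rmap_invol P (P.pairing_self α hα) δ'
      rw [h6] at h5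
      exact h5
  · constructor
    · intro δ hδ; exact ⟨δ, hδ, fun lv _ => by rw [oneApply]⟩
    · intro δ hδ; exact ⟨δ, hδ, fun lv _ => by rw [oneApply]⟩
  · intro a b ha hb iha ihb
    have hbW : b ∈ P.weylGroup := hb
    constructor
    · intro δ hδ
      obtain ⟨δ', hδ', h1⟩ := iha.1 δ hδ
      obtain ⟨δ'', hδ'', h2⟩ := ihb.1 δ' hδ'
      refine ⟨δ'', hδ'', ?_⟩
      intro lv hlv
      rw [mulApply, h1 (b lv) (aff_w P l0 hbW hlv), h2 lv hlv]
    · intro δ'' hδ''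
      obtain ⟨δ', hδ', h2⟩ := ihb.2 δ'' hδ''
      obtain ⟨δ, hδ, h1⟩ := iha.2 δ' hδ'
      refine ⟨δ, hδ, ?_⟩
      intro lv hlv
      rw [mulApply, h1 (b lv) (aff_w P l0 hbW hlv), h2 lv hlv]
  · intro a ha iha
    have haW : a ∈ P.weylGroup := ha
    have hainvW : a⁻¹ ∈ P.weylGroup := inv_mem haW
    constructor
    · intro δ hδ
      obtain ⟨δ₀, hδ₀, h1⟩ := iha.2 δ hδ
      refine ⟨δ₀, hδ₀, ?_⟩
      intro lv hlv
      have h2 := h1 (a⁻¹ lv) (aff_w P l0 hainvW hlv)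
      rw [← mulApply, mul_inv_cancel, oneApply] at h2
      exact h2.symm
    · intro δ' hδ'
      obtain ⟨δ'', hδ'', h1⟩ := iha.1 δ' hδ'
      refine ⟨δ'', hδ'', ?_⟩
      intro lv hlv
      have h2 := h1 (a⁻¹ lv) (aff_w P l0 hainvW hlv)
      rw [← mulApply, mul_inv_cancel, oneApply] at h2
      exact h2.symm
  

end Transport

section Orbit

variable (P : RootSystemData V) (l0 : V)

lemma orbit_w {g : V ≃ₗ[ℝ] V} (hg : g ∈ P.weylGroup) {x : V} (hx : x ∈ P.wOrbitLat l0) :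
    g x ∈ P.wOrbitLat l0 := by
  obtain ⟨w', hw', r, hr, rfl⟩ := hx
  refine ⟨g * w', mul_mem hg hw', g r, wMapsLattice P hg r hr, ?_⟩
  rw [map_add, mulApply]

lemma orbit_aff {x : V} (hx : x ∈ P.wOrbitLat l0) : Aff P l0 x := by
  obtain ⟨w', hw', r, hr, rfl⟩ := hx
  have h1 := wFixModSpan P hw' l0
  have h2 := latticeLeSpan P r hr
  have h3 : w' l0 + r - l0 = (w' l0 - l0) + r := by abel
  rw [Aff, h3]
  exact add_mem h1 h2

lemma l0_orbit : l0 ∈ P.wOrbitLat l0 :=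
  ⟨1, one_mem _, 0, zero_mem _, by rw [oneApply, add_zero]⟩

end Orbit

section Master

variable (P : RootSystemData V) {Δplus : Set V} (hpos : P.IsPositiveSystem Δplus) (l0 : V)
variable {F0 : Set V}
variable {F : Set V}
variable {c : (V ≃ₗ[ℝ] V) → V → V}

lemma factA
    (hcu : ∀ w ∈ P.weylGroup, ∀ l ∈ F, ∀ ν ∈ F,
       P.SameChamber ν (w l) → ν - l ∈ P.rootLattice → ν = c w l)
    {ν₁ ν₂ : V} (h1 : ν₁ ∈ F) (h2 : ν₂ ∈ F)
    (hsc : P.SameChamber ν₁ ν₂) (hlat : ν₁ - ν₂ ∈ P.rootLattice) : ν₁ = ν₂ := by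
  have e1 : ν₁ = c 1 ν₂ := hcu 1 (one_mem _) ν₂ h2 ν₁ h1 hsc hlat
  have e2 : ν₂ = c 1 ν₂ := by
    refine hcu 1 (one_mem _) ν₂ h2 ν₂ h2 ?_ (by rw [sub_self]; exact zero_mem _)
    intro α hα
    rfl
  exact e1.trans e2.symm

lemma master
    (hpos2 : P.IsPositiveSystem Δplus)
    (hF0 : ∀ μ ∈ F0, μ ∈ P.wOrbitLat l0 ∧ P.IsRegular μ ∧ P.IsDominant Δplus μ)
    (hF0rep : ∀ x ∈ P.wOrbitLat l0, ∃! ν, ν ∈ F0 ∧ x - ν ∈ P.rootLattice)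
    (hF : F = {x | ∃ w ∈ P.weylGroup, ∃ μ ∈ F0, x = w μ})
    (hcu : ∀ w ∈ P.weylGroup, ∀ l ∈ F, ∀ ν ∈ F,
       P.SameChamber ν (w l) → ν - l ∈ P.rootLattice → ν = c w l)
    {δ β : V} (hδ : δ ∈ P.Δ) (hβ : β ∈ P.Δ)
    (hθ : tphi P δ β l0 ≠ 0) : False := by
  classical
  set γ := sroot P δ β with hγdef
  have hγΔ : γ ∈ P.Δ := sroot_mem P hδ hβ
  set θ := tphi P δ β l0 with hθdef
  set τ₀ := tauE P hδ hβ with hτ₀def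
  have hτ₀W : τ₀ ∈ P.weylGroup := tauE_mem P hδ hβ
  have htphi_aff : ∀ lv : V, Aff P l0 lv → tphi P δ β lv = θ := by
    intro lv hlv
    have h3 : tphi P δ β lv = tphi P δ β l0 + tphi P δ β (lv - l0) := by
      rw [← map_add]; congr 1; abel
    rw [h3, tphi_span_zero P hδ hβ (lv - l0) hlv, add_zero]
  have hγspan : γ ∈ rspan P := Submodule.subset_span hγΔ
  have haffγ : ∀ (lv : V) (t : ℝ), Aff P l0 lv → Aff P l0 (lv + t • γ) := by
    intro lv t hlv
    have h4 : lv + t • γ - l0 = (lv - l0) + t • γ := by abel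
    rw [Aff, h4]
    exact add_mem hlv (Submodule.smul_mem _ _ hγspan)
  have hτ₀act : ∀ lv : V, Aff P l0 lv → τ₀ lv = lv + θ • γ := by
    intro lv hlv
    rw [hτ₀def, tauE_apply P hδ hβ, htphi_aff lv hlv]
  have hτ₀inv : ∀ lv : V, Aff P l0 lv → τ₀⁻¹ lv = lv - θ • γ := by
    intro lv hlv
    have h5 : τ₀ (lv - θ • γ) = lv := by
      have haff' : Aff P l0 (lv - θ • γ) := by
        have := haffγ lv (-θ) hlv
        rw [neg_smul] at this
        rw [sub_eq_add_neg]
        exact this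
      rw [hτ₀act _ haff']
      abel
    conv_lhs => rw [← h5]
    rw [invApply]
  -- choose direction
  obtain ⟨τ', θ', hτ'W, hact, hsgn⟩ :
      ∃ (τ' : V ≃ₗ[ℝ] V) (θ' : ℝ), τ' ∈ P.weylGroup ∧
        (∀ lv : V, Aff P l0 lv → τ' lv = lv + θ' • γ) ∧
        ((γ ∈ Δplus → θ' < 0) ∧ (γ ∉ Δplus → 0 < θ')) := by
    by_cases hγp : γ ∈ Δplus
    · rcases lt_or_gt_of_ne hθ with h | h
      · exact ⟨τ₀, θ, hτ₀W, hτ₀act, fun _ => h, fun hh => absurd hγp hh⟩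
      · refine ⟨τ₀⁻¹, -θ, inv_mem hτ₀W, ?_, fun _ => by linarith, fun hh => absurd hγp hh⟩
        intro lv hlv
        rw [hτ₀inv lv hlv, neg_smul, sub_eq_add_neg]
    · rcases lt_or_gt_of_ne hθ with h | h
      · refine ⟨τ₀⁻¹, -θ, inv_mem hτ₀W, ?_, fun hh => absurd hh hγp, fun _ => by linarith⟩
        intro lv hlv
        rw [hτ₀inv lv hlv, neg_smul, sub_eq_add_neg]
      · exact ⟨τ₀, θ, hτ₀W, hτ₀act, fun hh => absurd hh hγp, fun _ => h⟩
  have hθ'ne : θ' ≠ 0 := by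
    by_cases hγp : γ ∈ Δplus
    · exact ne_of_lt (hsgn.1 hγp)
    · exact ne_of_gt (hsgn.2 hγp)
  -- iterated action
  have hiterP : ∀ n : ℕ, ∀ lv : V, Aff P l0 lv →
      (τ' ^ n) lv = lv + ((n : ℝ) * θ') • γ := by
    intro n
    induction n with
    | zero => intro lv _; simp [oneApply]
    | succ n ih =>
      intro lv hlv
      rw [pow_succ, mulApply, hact lv hlv, ih _ (haffγ lv θ' hlv)]
      push_cast
      module
  have hτ'inv : ∀ lv : V, Aff P l0 lv → τ'⁻¹ lv = lv - θ' • γ := by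
    intro lv hlv
    have h5 : τ' (lv - θ' • γ) = lv := by
      have haff' : Aff P l0 (lv - θ' • γ) := by
        have := haffγ lv (-θ') hlv
        rw [neg_smul] at this
        rw [sub_eq_add_neg]
        exact this
      rw [hact _ haff']
      abel
    conv_lhs => rw [← h5]
    rw [invApply]
  have hiterN : ∀ n : ℕ, ∀ lv : V, Aff P l0 lv →
      ((τ'⁻¹) ^ n) lv = lv - ((n : ℝ) * θ') • γ := by
    intro n
    induction n with
    | zero => intro lv _; simp [oneApply]
    | succ n ih =>
      intro lv hlv
      have haff' : Aff P l0 (lv - θ' • γ) := by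
        have := haffγ lv (-θ') hlv
        rw [neg_smul] at this
        rw [sub_eq_add_neg]
        exact this
      rw [pow_succ, mulApply, hτ'inv lv hlv, ih _ haff']
      push_cast
      module
  -- base point
  obtain ⟨lhat, hlhatF0, hlhatR⟩ := (hF0rep l0 (l0_orbit P l0)).exists
  have hlhat_orbit : lhat ∈ P.wOrbitLat l0 := (hF0 lhat hlhatF0).1
  have hlhat_aff : Aff P l0 lhat := orbit_aff P l0 hlhat_orbit
  -- the sequence of representatives
  have hxorb : ∀ n : ℕ, (τ' ^ n) lhat ∈ P.wOrbitLat l0 := fun n =>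
    orbit_w P l0 (pow_mem hτ'W n) hlhat_orbit
  choose Lam hLamF0 hLamR using fun n : ℕ => (hF0rep ((τ' ^ n) lhat) (hxorb n)).exists
  have hLam_aff : ∀ n, Aff P l0 (Lam n) := fun n => orbit_aff P l0 (hF0 _ (hLamF0 n)).1
  set b : ℕ → V := fun n => Lam n - ((n : ℝ) * θ') • γ with hbdef
  have hbF : ∀ n, b n ∈ F := by
    intro n
    rw [hF]
    refine ⟨(τ'⁻¹) ^ n, pow_mem (inv_mem hτ'W) n, Lam n, hLamF0 n, ?_⟩
    rw [hiterN n _ (hLam_aff n)]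
  have hbR : ∀ n, b n - lhat ∈ P.rootLattice := by
    intro n
    have h6 : (τ' ^ n) lhat = lhat + ((n : ℝ) * θ') • γ := hiterP n _ hlhat_aff
    have h7 : b n - lhat = -((τ' ^ n) lhat - Lam n) := by
      rw [hbdef]
      simp only []
      rw [h6]
      abel
    rw [h7]
    exact neg_mem (hLamR n)
  -- pigeonhole on sign patterns
  have hfinΔ : Finite P.Δ.Elem := P.finite.to_subtype
  set f : ℕ → (P.Δ.Elem → Bool) := fun n p => decide (0 < P.coroot p.1 (b n)) with hfdef
  obtain ⟨pat, hpat⟩ := Finite.exists_infinite_fiber f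
  have hTinf : (f ⁻¹' {pat}).Infinite := Set.infinite_coe_iff.mp hpat
  obtain ⟨m₀, hm₀⟩ := hTinf.nonempty
  have hbeq : ∀ n ∈ f ⁻¹' {pat}, b n = b m₀ := by
    intro n hn
    refine factA P hcu (hbF n) (hbF m₀) ?_ ?_
    · intro α hα
      have hde : f n ⟨α, hα⟩ = f m₀ ⟨α, hα⟩ := by
        have : f n = pat := hn
        have h2 : f m₀ = pat := hm₀
        rw [this, h2]
      rw [hfdef] at hde
      simpa using decide_eq_decide.mp hde
    · have := hbR n
      have h2 := hbR m₀
      have h3 : b n - b m₀ = (b n - lhat) - (b m₀ - lhat) := by abel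
      rw [h3]
      exact sub_mem this h2
  -- large n in the fiber
  set C := P.coroot γ (b m₀) with hCdef
  obtain ⟨N, hN⟩ := exists_nat_gt (|C| / (2 * |θ'|))
  obtain ⟨n, hnT, hnN⟩ := hTinf.exists_gt N
  have hval : P.coroot γ (Lam n) = C + (n : ℝ) * θ' * 2 := by
    have h8 : Lam n = b m₀ + ((n : ℝ) * θ') • γ := by
      have := hbeq n hnT
      rw [hbdef] at this
      simp only [] at this
      have h9 : Lam n - ((n : ℝ) * θ') • γ = b m₀ := this
      rw [← h9]
      abel
    rw [h8, map_add, map_smul, P.pairing_self γ hγΔ, smul_eq_mul]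
    try ring
  have hnbig : |C| < (n : ℝ) * (2 * |θ'|) := by
    have h2pos : (0 : ℝ) < 2 * |θ'| := by
      have := abs_pos.mpr hθ'ne
      linarith
    rw [div_lt_iff₀ h2pos] at hN
    have : (N : ℝ) < (n : ℝ) := by exact_mod_cast hnN
    nlinarith [abs_nonneg C]
  have hdp := dompos P hpos2 (hF0 _ (hLamF0 n)).2.1 (hF0 _ (hLamF0 n)).2.2 γ hγΔ
  by_cases hγp : γ ∈ Δplus
  · have hlt : θ' < 0 := hsgn.1 hγp
    have hpos' : 0 < P.coroot γ (Lam n) := hdp.mpr hγp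
    rw [hval] at hpos'
    have habs : |θ'| = -θ' := abs_of_neg hlt
    rw [habs] at hnbig
    have hC1 : C ≤ |C| := le_abs_self C
    nlinarith
  · have hgt : 0 < θ' := hsgn.2 hγp
    have hnpos : ¬ (0 < P.coroot γ (Lam n)) := fun hh => hγp (hdp.mp hh)
    rw [hval] at hnpos
    have habs : |θ'| = θ' := abs_of_pos hgt
    rw [habs] at hnbig
    have hC1 : -|C| ≤ C := neg_abs_le C
    nlinarith

end Master

end CAux

/-- The explicit formula for the cross action (from the proof of Lemma 6.2):
for `w, x, y ∈ W` and `v = x⁻¹w⁻¹xy`, the element `w x λ_v` lies in the same Weyl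
chamber as `w x λ_y`, satisfies `w x λ_v − x λ_y ∈ R`, and hence
`w · (x λ_y) = w x λ_{x⁻¹w⁻¹xy}`. -/
theorem cross_action_explicit_formula
    (P : RootSystemData V) (Δplus : Set V) (hpos : P.IsPositiveSystem Δplus)
    (l0 : V) (hreg : P.IsRegular l0) (hdom : P.IsDominant Δplus l0)
    (F0 : Set V)
    (hF0 : ∀ μ ∈ F0, μ ∈ P.wOrbitLat l0 ∧ P.IsRegular μ ∧ P.IsDominant Δplus μ)
    (hF0rep : ∀ x ∈ P.wOrbitLat l0, ∃! ν, ν ∈ F0 ∧ x - ν ∈ P.rootLattice)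
    (F : Set V) (hF : F = {x | ∃ w ∈ P.weylGroup, ∃ μ ∈ F0, x = w μ})
    -- `lam w` is the element `λ_w` of `F₀` in the coset `wλ₀ + R`
    (lam : (V ≃ₗ[ℝ] V) → V)
    (hlam : ∀ w ∈ P.weylGroup, lam w ∈ F0 ∧ lam w - w l0 ∈ P.rootLattice)
    -- `c w l` is the cross action `w · l`: the unique element of `F` in the same
    -- Weyl chamber as `w l` and congruent to `l` modulo `R`
    (c : (V ≃ₗ[ℝ] V) → V → V)
    (hc : ∀ w ∈ P.weylGroup, ∀ l ∈ F,
       c w l ∈ F ∧ P.SameChamber (c w l) (w l) ∧ c w l - l ∈ P.rootLattice)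
    (hcu : ∀ w ∈ P.weylGroup, ∀ l ∈ F, ∀ ν ∈ F,
       P.SameChamber ν (w l) → ν - l ∈ P.rootLattice → ν = c w l) :
    ∀ w ∈ P.weylGroup, ∀ x ∈ P.weylGroup, ∀ y ∈ P.weylGroup,
      P.SameChamber (w (x (lam (x⁻¹ * w⁻¹ * x * y)))) (w (x (lam y))) ∧
      w (x (lam (x⁻¹ * w⁻¹ * x * y))) - x (lam y) ∈ P.rootLattice ∧
      c w (x (lam y)) = w (x (lam (x⁻¹ * w⁻¹ * x * y))) := by
  intro w hw x hx y hy
  by_cases hH : ∀ δ ∈ P.Δ, ∀ β ∈ P.Δ, CAux.tphi P δ β l0 = 0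
  · set v := x⁻¹ * w⁻¹ * x * y with hv
    have hvW : v ∈ P.weylGroup :=
      mul_mem (mul_mem (mul_mem (inv_mem hx) (inv_mem hw)) hx) hy
    obtain ⟨hlvF0, hlvR⟩ := hlam v hvW
    obtain ⟨hlyF0, hlyR⟩ := hlam y hy
    have hwx : w * x ∈ P.weylGroup := mul_mem hw hx
    have hlv_aff : CAux.Aff P l0 (lam v) := CAux.orbit_aff P l0 (hF0 _ hlvF0).1
    have hly_aff : CAux.Aff P l0 (lam y) := CAux.orbit_aff P l0 (hF0 _ hlyF0).1
    have htrans := CAux.transport P l0 hH (w * x) hwx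
    have hc1 : P.SameChamber (w (x (lam v))) (w (x (lam y))) := by
      intro δ hδ
      obtain ⟨δ', hδ', heq⟩ := htrans.1 δ hδ
      have e1 : w (x (lam v)) = (w * x) (lam v) := rfl
      have e2 : w (x (lam y)) = (w * x) (lam y) := rfl
      rw [e1, e2, heq _ hlv_aff, heq _ hly_aff]
      rw [CAux.dompos P hpos (hF0 _ hlvF0).2.1 (hF0 _ hlvF0).2.2 δ' hδ',
          CAux.dompos P hpos (hF0 _ hlyF0).2.1 (hF0 _ hlyF0).2.2 δ' hδ']
    have hgrp : (w * x) * v = x * y := by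
      rw [hv]; group
    have hc2 : w (x (lam v)) - x (lam y) ∈ P.rootLattice := by
      have e4 : (w * x) (v l0) = x (y l0) := by
        have h := congrArg (fun g : V ≃ₗ[ℝ] V => g l0) hgrp
        simpa [CAux.mulApply] using h
      have e3 : w (x (lam v)) - x (lam y)
          = ((w * x) (lam v - v l0)) - (x (lam y - y l0)) := by
        rw [map_sub, map_sub, e4, CAux.mulApply]
        abel
      rw [e3]
      exact sub_mem (CAux.wMapsLattice P hwx _ hlvR) (CAux.wMapsLattice P hx _ hlyR)
    have hlyF : x (lam y) ∈ F := by
      rw [hF]; exact ⟨x, hx, lam y, hlyF0, rfl⟩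
    have hwxlvF : w (x (lam v)) ∈ F := by
      rw [hF]; exact ⟨w * x, hwx, lam v, hlvF0, rfl⟩
    exact ⟨hc1, hc2, (hcu w hw (x (lam y)) hlyF (w (x (lam v))) hwxlvF hc1 hc2).symm⟩
  · push_neg at hH
    obtain ⟨δ, hδ, β, hβ, hθ⟩ := hH
    exact (CAux.master P l0 hpos hF0 hF0rep hF hcu hδ hβ hθ).elim
end

section
/- Let Δ be simply laced and let α₁, …, αₙ ∈ Δ be pairwise orthogonal roots (⟨αᵢ, αⱼ∨⟩ = 0 for i ≠ j). Then the only roots of Δ lying in the ℤ-span of {α₁, …, αₙ} are ±α₁, …, ±αₙ. -/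
variable {V : Type*} [AddCommGroup V] [Module ℝ V]

/-- In a simply laced root system, the only roots in the ℤ-span of a set of pairwise
orthogonal roots `α₁, …, αₙ` are `±α₁, …, ±αₙ`. -/
theorem roots_in_span_of_orthogonal_roots
    (P : RootSystemData V) (hsl : P.SimplyLaced)
    {n : ℕ} (α : Fin n → V) (hmem : ∀ i, α i ∈ P.Δ)
    (horth : ∀ i j, i ≠ j → P.coroot (α j) (α i) = 0)
    {β : V} (hβ : β ∈ P.Δ)
    (hspan : β ∈ AddSubgroup.closure (Set.range α)) :
    ∃ i, β = α i ∨ β = -α i := by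
  by_contra h
  push_neg at h
  rw [← Submodule.span_int_eq_addSubgroupClosure, Submodule.mem_toAddSubgroup,
    Submodule.mem_span_range_iff_exists_fun] at hspan
  obtain ⟨c, hc⟩ := hspan
  have hci : ∀ i, c i = 0 := by
    intro i
    have hpair : P.coroot (α i) β = 2 * (c i : ℝ) := by
      rw [← hc, map_sum, Finset.sum_eq_single i]
      · rw [map_zsmul, P.pairing_self _ (hmem i), zsmul_eq_mul]
        ring
      · intro j _ hj
        rw [map_zsmul, horth j i hj, smul_zero]
      · simp
    have hsl' := hsl β hβ (α i) (hmem i) (h i).1 (h i).2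
    rw [hpair] at hsl'
    simp only [Set.mem_insert_iff, Set.mem_singleton_iff] at hsl'
    have h3 : (2 * c i : ℤ) = -1 ∨ (2 * c i : ℤ) = 0 ∨ (2 * c i : ℤ) = 1 := by
      rcases hsl' with h' | h' | h'
      · left; exact_mod_cast h'
      · right; left; exact_mod_cast h'
      · right; right; exact_mod_cast h'
    omega
  have hβ0 : β = 0 := by rw [← hc]; simp [hci]
  have h2 := P.pairing_self β hβ
  rw [hβ0, map_zero] at h2
  norm_num at h2
end

section
/- Let Δ be simply laced and let {α₁, …, αₙ} and {β₁, …, β_m} be two sets of pairwise orthogonal roots of Δ (each set consisting of linearly independent elements, as pairwise orthogonal roots automatically are) having the same ℤ-span in V. Then m = n, and there is a permutation σ of {1, …, n} and signs ε₁, …, εₙ ∈ {±1} such that βᵢ = εᵢ α_{σ(i)} for all i. -/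
variable {V : Type*} [AddCommGroup V] [Module ℝ V]

private lemma pairing_combo (P : RootSystemData V)
    {n : ℕ} (α : Fin n → V)
    (hαmem : ∀ i, α i ∈ P.Δ)
    (hαorth : ∀ i j, i ≠ j → P.coroot (α j) (α i) = 0)
    (c : Fin n → ℤ) (k : Fin n) :
    P.coroot (α k) (∑ j, c j • α j) = 2 * (c k : ℝ) := by
  rw [map_sum, Finset.sum_eq_single k]
  · rw [map_zsmul, P.pairing_self _ (hαmem k), zsmul_eq_mul]
    ring
  · intro j _ hj
    rw [map_zsmul, hαorth j k hj, smul_zero]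
  · simp

private lemma exists_pm (P : RootSystemData V) (hsl : P.SimplyLaced)
    {n : ℕ} (α : Fin n → V)
    (hαmem : ∀ i, α i ∈ P.Δ)
    (hαorth : ∀ i j, i ≠ j → P.coroot (α j) (α i) = 0)
    {b : V} (hb : b ∈ P.Δ)
    (hbspan : b ∈ AddSubgroup.closure (Set.range α)) :
    ∃ j, b = α j ∨ b = -α j := by
  rw [← Submodule.span_int_eq_addSubgroupClosure, Submodule.mem_toAddSubgroup] at hbspan
  obtain ⟨c, hc⟩ := (Submodule.mem_span_range_iff_exists_fun ℤ).mp hbspan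
  by_contra h
  push_neg at h
  have hc0 : ∀ j, c j = 0 := by
    intro j
    have h1 := hsl b hb (α j) (hαmem j) (h j).1 (h j).2
    have h2 : P.coroot (α j) b = 2 * (c j : ℝ) := by
      rw [← hc]; exact pairing_combo P α hαmem hαorth c j
    simp only [Set.mem_insert_iff, Set.mem_singleton_iff] at h1
    rcases h1 with h1 | h1 | h1 <;> rw [h2] at h1
    · have h3 : 2 * c j = -1 := by exact_mod_cast h1
      omega
    · have h3 : 2 * c j = 0 := by exact_mod_cast h1
      omega
    · have h3 : 2 * c j = 1 := by exact_mod_cast h1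
      omega
  have hb0 : b = 0 := by rw [← hc]; simp [hc0]
  have h2 := P.pairing_self b hb
  rw [hb0] at h2
  simp at h2


private lemma sigma_inj (P : RootSystemData V)
    {n m : ℕ} (α : Fin n → V) (β : Fin m → V)
    (hαmem : ∀ i, α i ∈ P.Δ)
    (hβorth : ∀ i j, i ≠ j → P.coroot (β j) (β i) = 0)
    (σ : Fin m → Fin n)
    (hσ : ∀ i, β i = α (σ i) ∨ β i = -α (σ i)) :
    Function.Injective σ := by
  intro i i' he
  by_contra hne
  have h0 := hβorth i i' hne
  have h2 : P.coroot (β i') (β i) = 2 ∨ P.coroot (β i') (β i) = -2 := by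
    rcases hσ i with h | h <;> rcases hσ i' with h' | h' <;>
        rw [h, h', ← he] <;>
      simp [P.coroot_neg _ (hαmem (σ i)), P.pairing_self _ (hαmem (σ i))]
  rcases h2 with h2 | h2 <;> rw [h0] at h2 <;> norm_num at h2

/-- Uniqueness, up to ordering and signs, of an orthogonal root basis (Lemma 6.9):
if two linearly independent families of pairwise orthogonal roots of a simply laced
root system have the same ℤ-span, then they have the same length and agree up to a
permutation and signs. -/
theorem orthogonal_root_basis_unique
    (P : RootSystemData V) (hsl : P.SimplyLaced)
    {n m : ℕ} (α : Fin n → V) (β : Fin m → V)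
    (hαmem : ∀ i, α i ∈ P.Δ) (hβmem : ∀ i, β i ∈ P.Δ)
    (hαorth : ∀ i j, i ≠ j → P.coroot (α j) (α i) = 0)
    (hβorth : ∀ i j, i ≠ j → P.coroot (β j) (β i) = 0)
    (hαli : LinearIndependent ℝ α) (hβli : LinearIndependent ℝ β)
    (hspan : AddSubgroup.closure (Set.range α) = AddSubgroup.closure (Set.range β)) :
    m = n ∧ ∃ σ : Fin m → Fin n, Function.Bijective σ ∧
      ∀ i, β i = α (σ i) ∨ β i = -α (σ i) := by
  have hβα : ∀ i, ∃ j, β i = α j ∨ β i = -α j := fun i =>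
    exists_pm P hsl α hαmem hαorth (hβmem i)
      (hspan ▸ AddSubgroup.subset_closure (Set.mem_range_self i))
  have hαβ : ∀ i, ∃ j, α i = β j ∨ α i = -β j := fun i =>
    exists_pm P hsl β hβmem hβorth (hαmem i)
      (hspan.symm ▸ AddSubgroup.subset_closure (Set.mem_range_self i))
  choose σ hσ using hβα
  choose τ hτ using hαβ
  have hσinj := sigma_inj P α β hαmem hβorth σ hσ
  have hτinj := sigma_inj P β α hβmem hαorth τ hτ
  have hmn : m = n := le_antisymm
    (by simpa using Fintype.card_le_of_injective σ hσinj)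
    (by simpa using Fintype.card_le_of_injective τ hτinj)
  subst hmn
  exact ⟨rfl, σ, Finite.injective_iff_bijective.mp hσinj, hσ⟩
end

section
/- Let θ : V → V be a linear involution with θ(Δ) = Δ and ⟨θx, (θα)∨⟩ = ⟨x, α∨⟩ for all x ∈ V and α ∈ Δ (so in particular (θα)∨ = −α∨ when θα = −α). Call a root β complex if θβ ∉ {β, −β}, and call it real if θβ = −β. Let c ∈ V* lie in the ℤ-span of the set of real coroots {α∨ : α ∈ Δ, θα = −α}. Suppose S and S′ are subsets of Δ such that the set of complex roots of Δ is the disjoint union of the four-element sets {β, −β, θβ, −θβ} over β ∈ S, and also the disjoint union of the sets {β, −β, θβ, −θβ} over β ∈ S′. Then Σ_{β ∈ S} ⟨β, c⟩ ≡ Σ_{β ∈ S′} ⟨β, c⟩ (mod 2). -/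
variable {V : Type*} [AddCommGroup V] [Module ℝ V]

/-! Since `c` is an integral combination of real coroots, it is integral on the roots and
`c ∘ θ = -c`; hence `⟨·, c⟩` is constant modulo `2` on every quadruple `{β, −β, θβ, −θβ}` of roots.
Each representative in `S` lies in the quadruple of exactly one representative in `S′` and
conversely, so the difference of the two sums is a sum, over these matched pairs, of
differences of values on a common quadruple. -/

open Finset

theorem Finset.sum_filter_product_fst_of_existsUnique {ι κ M : Type*} [AddCommMonoid M]
    {s : Finset ι} {t : Finset κ} {r : ι → κ → Prop} [∀ a b, Decidable (r a b)]
    (h : ∀ a ∈ s, ∃! b, b ∈ t ∧ r a b) (f : ι → M) :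
    ∑ p ∈ (s ×ˢ t).filter (fun p => r p.1 p.2), f p.1 = ∑ a ∈ s, f a := by
  rw [sum_filter, sum_product]
  refine sum_congr rfl fun a ha => ?_
  obtain ⟨b, ⟨hb, hab⟩, huniq⟩ := h a ha
  rw [sum_eq_single_of_mem b hb fun b' hb' hne => if_neg fun h' => hne (huniq b' ⟨hb', h'⟩),
    if_pos hab]

theorem Finset.sum_filter_product_snd_of_existsUnique {ι κ M : Type*} [AddCommMonoid M]
    {s : Finset ι} {t : Finset κ} {r : ι → κ → Prop} [∀ a b, Decidable (r a b)]
    (h : ∀ b ∈ t, ∃! a, a ∈ s ∧ r a b) (f : κ → M) :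
    ∑ p ∈ (s ×ˢ t).filter (fun p => r p.1 p.2), f p.2 = ∑ b ∈ t, f b := by
  rw [sum_filter, sum_product_right]
  refine sum_congr rfl fun b hb => ?_
  obtain ⟨a, ⟨ha, hab⟩, huniq⟩ := h b hb
  rw [sum_eq_single_of_mem a ha fun a' ha' hne => if_neg fun h' => hne (huniq a' ⟨ha', h'⟩),
    if_pos hab]

theorem existsUnique_mem_of_disjoint {ι α : Type*} {T : Finset ι} {B : ι → Set α} {γ : α}
    (hdisj : ∀ i ∈ T, ∀ j ∈ T, i ≠ j → ∀ x, x ∈ B i → x ∈ B j → False)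
    (h : ∃ i ∈ T, γ ∈ B i) : ∃! i, i ∈ T ∧ γ ∈ B i := by
  obtain ⟨i, hi, hγi⟩ := h
  exact ⟨i, ⟨hi, hγi⟩, fun j ⟨hj, hγj⟩ => by_contra fun hne => hdisj j hj i hi hne γ hγj hγi⟩

namespace Module.Dual

variable {R M : Type*} [CommRing R] [AddCommGroup M] [Module R M]
  {s : Set (Module.Dual R M)} {c : Module.Dual R M}

theorem apply_eq_neg_of_mem_closure {θ : M → M} (hc : c ∈ AddSubgroup.closure s)
    (hs : ∀ f ∈ s, ∀ x, f (θ x) = -f x) (x : M) : c (θ x) = -c x := by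
  induction hc using AddSubgroup.closure_induction with
  | mem f hf => exact hs f hf x
  | zero => simp
  | add f g _ _ hf hg => simp [hf, hg, add_comm]
  | neg f _ hf => simp [hf]

theorem exists_int_apply_eq_of_mem_closure {x : M} (hc : c ∈ AddSubgroup.closure s)
    (hs : ∀ f ∈ s, ∃ n : ℤ, f x = n) : ∃ n : ℤ, c x = n := by
  induction hc using AddSubgroup.closure_induction with
  | mem f hf => exact hs f hf
  | zero => exact ⟨0, by simp⟩
  | add f g _ _ hf hg =>
    obtain ⟨m, hm⟩ := hf
    obtain ⟨n, hn⟩ := hg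
    exact ⟨m + n, by simp [hm, hn]⟩
  | neg f _ hf =>
    obtain ⟨n, hn⟩ := hf
    exact ⟨-n, by simp [hn]⟩

end Module.Dual

theorem RootSystemData.coroot_apply_map_of_map_eq_neg (P : RootSystemData V) {θ : V →ₗ[ℝ] V}
    (hθpair : ∀ x : V, ∀ α ∈ P.Δ, P.coroot (θ α) (θ x) = P.coroot α x)
    {α : V} (hα : α ∈ P.Δ) (hθα : θ α = -α) (x : V) :
    P.coroot α (θ x) = -P.coroot α x := by
  have h := hθpair x α hα
  rw [hθα, P.coroot_neg α hα, LinearMap.neg_apply] at h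
  exact neg_eq_iff_eq_neg.1 h

section Quadruple

variable {M F : Type*} [AddCommGroup M] [FunLike F M M]

def quadruple (θ : F) (β : M) : Set M := {β, -β, θ β, -θ β}

theorem mem_quadruple_self (θ : F) (β : M) : β ∈ quadruple θ β := Set.mem_insert β _

theorem sub_mem_zmultiples_two_of_mem_quadruple {R G : Type*} [CommRing R] [FunLike G M R]
    [AddMonoidHomClass G M R] {θ : F} {c : G} (hc : ∀ x, c (θ x) = -c x)
    {β γ : M} {n : ℤ} (hn : c β = n) (hγ : γ ∈ quadruple θ β) :
    c γ - c β ∈ AddSubgroup.zmultiples (2 : R) := by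
  rcases hγ with rfl | rfl | rfl | rfl
  · simp
  · exact AddSubgroup.mem_zmultiples_iff.2 ⟨-n, by rw [map_neg, hn, zsmul_eq_mul]; push_cast; ring⟩
  · exact AddSubgroup.mem_zmultiples_iff.2 ⟨-n, by rw [hc, hn, zsmul_eq_mul]; push_cast; ring⟩
  · simp [hc]

variable [AddMonoidHomClass F M M]

theorem mem_quadruple_comm {θ : F} (hθ : ∀ x, θ (θ x) = x) {β γ : M} :
    γ ∈ quadruple θ β ↔ β ∈ quadruple θ γ := by
  have key : ∀ β γ : M, γ ∈ quadruple θ β → β ∈ quadruple θ γ := by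
    rintro β γ (rfl | rfl | rfl | rfl) <;> simp [quadruple, hθ]
  exact ⟨key β γ, key γ β⟩

end Quadruple

theorem sum_over_complex_representatives_mod_two_general
    (P : RootSystemData V) (θ : V →ₗ[ℝ] V)
    (hinv : ∀ x : V, θ (θ x) = x)
    (hθpair : ∀ x : V, ∀ α ∈ P.Δ, P.coroot (θ α) (θ x) = P.coroot α x)
    (c : Module.Dual ℝ V)
    (hc : c ∈ AddSubgroup.closure
        {f : Module.Dual ℝ V | ∃ α ∈ P.Δ, θ α = -α ∧ f = P.coroot α})
    (S S' : Finset V)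
    -- the quadruples over `S` cover exactly the complex roots
    (hScover : ∀ γ : V, (γ ∈ P.Δ ∧ θ γ ≠ γ ∧ θ γ ≠ -γ) ↔
       ∃ β ∈ S, γ = β ∨ γ = -β ∨ γ = θ β ∨ γ = -θ β)
    -- the quadruples over `S` are four-element sets and pairwise disjoint
    (hSdisj : ∀ β ∈ S, ∀ β' ∈ S, β ≠ β' → ∀ γ : V,
       (γ = β ∨ γ = -β ∨ γ = θ β ∨ γ = -θ β) →
       (γ = β' ∨ γ = -β' ∨ γ = θ β' ∨ γ = -θ β') → False)
    -- likewise for `S′`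
    (hS'cover : ∀ γ : V, (γ ∈ P.Δ ∧ θ γ ≠ γ ∧ θ γ ≠ -γ) ↔
       ∃ β ∈ S', γ = β ∨ γ = -β ∨ γ = θ β ∨ γ = -θ β)
    (hS'disj : ∀ β ∈ S', ∀ β' ∈ S', β ≠ β' → ∀ γ : V,
       (γ = β ∨ γ = -β ∨ γ = θ β ∨ γ = -θ β) →
       (γ = β' ∨ γ = -β' ∨ γ = θ β' ∨ γ = -θ β') → False) :
    ∃ k : ℤ, (∑ β ∈ S, c β) - (∑ β ∈ S', c β) = 2 * (k : ℝ) := by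
  classical
  have hS'rep : ∀ β ∈ S, ∃! β', β' ∈ S' ∧ β ∈ quadruple θ β' := fun β hβ =>
    existsUnique_mem_of_disjoint hS'disj
      ((hS'cover β).1 ((hScover β).2 ⟨β, hβ, mem_quadruple_self θ β⟩))
  have hSrep : ∀ β' ∈ S', ∃! β, β ∈ S ∧ β ∈ quadruple θ β' := fun β' hβ' => by
    refine (existsUnique_congr fun β => and_congr_right' (mem_quadruple_comm hinv)).2 ?_
    exact existsUnique_mem_of_disjoint hSdisj
      ((hScover β').1 ((hS'cover β').2 ⟨β', hβ', mem_quadruple_self θ β'⟩))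
  have hanti : ∀ x, c (θ x) = -c x := Module.Dual.apply_eq_neg_of_mem_closure hc
    fun _ ⟨α, hα, hθα, hf⟩ => hf ▸ P.coroot_apply_map_of_map_eq_neg hθpair hα hθα
  have hint : ∀ β ∈ P.Δ, ∃ n : ℤ, c β = n := fun β hβ =>
    Module.Dual.exists_int_apply_eq_of_mem_closure hc
      fun _ ⟨α, hα, _, hf⟩ => hf ▸ P.pairing_int β hβ α hα
  suffices (∑ β ∈ S, c β) - ∑ β ∈ S', c β ∈ AddSubgroup.zmultiples (2 : ℝ) by
    obtain ⟨k, hk⟩ := AddSubgroup.mem_zmultiples_iff.1 this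
    exact ⟨k, by rw [← hk, zsmul_eq_mul, mul_comm]⟩
  rw [← sum_filter_product_fst_of_existsUnique hS'rep,
    ← sum_filter_product_snd_of_existsUnique hSrep, ← sum_sub_distrib]
  refine AddSubgroup.sum_mem _ fun p hp => ?_
  obtain ⟨hpS, hp⟩ := mem_filter.1 hp
  obtain ⟨-, hp₂⟩ := mem_product.1 hpS
  obtain ⟨n, hn⟩ := hint p.2 ((hS'cover p.2).2 ⟨p.2, hp₂, mem_quadruple_self θ p.2⟩).1
  exact sub_mem_zmultiples_two_of_mem_quadruple hanti hn hp

/-- Independence of the character `ζ_cx` on the set of representatives of the complex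
roots (Section 8): if `c` lies in the ℤ-span of the real coroots and `S`, `S′` are two
sets of representatives of the quadruples `{β, −β, θβ, −θβ}` partitioning the complex
roots, then `Σ_{β ∈ S} ⟨β, c⟩ ≡ Σ_{β ∈ S′} ⟨β, c⟩ (mod 2)`. -/
theorem sum_over_complex_representatives_mod_two
    (P : RootSystemData V) (θ : V →ₗ[ℝ] V)
    (hinv : ∀ x : V, θ (θ x) = x)
    (hθΔ : ∀ α ∈ P.Δ, θ α ∈ P.Δ)
    (hθpair : ∀ x : V, ∀ α ∈ P.Δ, P.coroot (θ α) (θ x) = P.coroot α x)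
    (c : Module.Dual ℝ V)
    (hc : c ∈ AddSubgroup.closure
        {f : Module.Dual ℝ V | ∃ α ∈ P.Δ, θ α = -α ∧ f = P.coroot α})
    (S S' : Finset V)
    -- the quadruples over `S` cover exactly the complex roots
    (hScover : ∀ γ : V, (γ ∈ P.Δ ∧ θ γ ≠ γ ∧ θ γ ≠ -γ) ↔
       ∃ β ∈ S, γ = β ∨ γ = -β ∨ γ = θ β ∨ γ = -θ β)
    -- the quadruples over `S` are four-element sets and pairwise disjoint
    (hSfour : ∀ β ∈ S, β ≠ -β ∧ β ≠ θ β ∧ β ≠ -θ β ∧ -β ≠ θ β ∧ -β ≠ -θ β ∧ θ β ≠ -θ β)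
    (hSdisj : ∀ β ∈ S, ∀ β' ∈ S, β ≠ β' → ∀ γ : V,
       (γ = β ∨ γ = -β ∨ γ = θ β ∨ γ = -θ β) →
       (γ = β' ∨ γ = -β' ∨ γ = θ β' ∨ γ = -θ β') → False)
    -- likewise for `S′`
    (hS'cover : ∀ γ : V, (γ ∈ P.Δ ∧ θ γ ≠ γ ∧ θ γ ≠ -γ) ↔
       ∃ β ∈ S', γ = β ∨ γ = -β ∨ γ = θ β ∨ γ = -θ β)
    (hS'four : ∀ β ∈ S', β ≠ -β ∧ β ≠ θ β ∧ β ≠ -θ β ∧ -β ≠ θ β ∧ -β ≠ -θ β ∧ θ β ≠ -θ β)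
    (hS'disj : ∀ β ∈ S', ∀ β' ∈ S', β ≠ β' → ∀ γ : V,
       (γ = β ∨ γ = -β ∨ γ = θ β ∨ γ = -θ β) →
       (γ = β' ∨ γ = -β' ∨ γ = θ β' ∨ γ = -θ β') → False) :
    ∃ k : ℤ, (∑ β ∈ S, c β) - (∑ β ∈ S', c β) = 2 * (k : ℝ) :=
  sum_over_complex_representatives_mod_two_general P θ hinv hθpair c hc S S' hScover hSdisj hS'cover
    hS'disj
end

section
/- Let Δ be a reduced crystallographic root system with a fixed involution θ preserving Δ, and suppose α ∈ Δ is a real root (θα = −α). Let S be a set of complex roots of Δ (roots β with θβ ∉ {β, −β}) such that the set of all complex roots equals {±β, ±θβ : β ∈ S}, with these four roots distinct for each β ∈ S and the union disjoint. Let X = {β ∈ S : s_α β = θβ and ⟨β, α∨⟩ is odd}. Then Σ_{β ∈ S} ⟨β, α∨⟩ ≡ Σ_{β ∈ X} ⟨β, α∨⟩ (mod 2); that is, in the sum over S, the contribution of all β with s_α β ≠ θβ or ⟨β, α∨⟩ even is even. -/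
variable {V : Type*} [AddCommGroup V] [Module ℝ V]

/-- The combinatorial reduction in the proof of Lemma 8.8: for a real root `α` and a
set `S` of representatives of the quadruples `{β, −β, θβ, −θβ}` partitioning the
complex roots, the sum `Σ_{β ∈ S} ⟨β, α∨⟩` has the same parity as the subsum over
`X = {β ∈ S : s_α β = θβ and ⟨β, α∨⟩ odd}`. -/
theorem sum_reduces_to_X_mod_two
    (P : RootSystemData V) (θ : V →ₗ[ℝ] V)
    (hinv : ∀ x : V, θ (θ x) = x)
    (hθΔ : ∀ α ∈ P.Δ, θ α ∈ P.Δ)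
    (hθpair : ∀ x : V, ∀ α ∈ P.Δ, P.coroot (θ α) (θ x) = P.coroot α x)
    (α : V) (hα : α ∈ P.Δ) (hreal : θ α = -α)
    (S : Finset V)
    -- the quadruples over `S` cover exactly the complex roots
    (hScover : ∀ γ : V, (γ ∈ P.Δ ∧ θ γ ≠ γ ∧ θ γ ≠ -γ) ↔
       ∃ β ∈ S, γ = β ∨ γ = -β ∨ γ = θ β ∨ γ = -θ β)
    -- the quadruples over `S` are four-element sets and pairwise disjoint
    (hSfour : ∀ β ∈ S, β ≠ -β ∧ β ≠ θ β ∧ β ≠ -θ β ∧ -β ≠ θ β ∧ -β ≠ -θ β ∧ θ β ≠ -θ β)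
    (hSdisj : ∀ β ∈ S, ∀ β' ∈ S, β ≠ β' → ∀ γ : V,
       (γ = β ∨ γ = -β ∨ γ = θ β ∨ γ = -θ β) →
       (γ = β' ∨ γ = -β' ∨ γ = θ β' ∨ γ = -θ β') → False)
    (X : Finset V)
    (hX : ∀ β : V, β ∈ X ↔
       β ∈ S ∧ β - P.coroot α β • α = θ β ∧ ∃ n : ℤ, P.coroot α β = 2 * (n : ℝ) + 1) :
    ∃ k : ℤ, (∑ β ∈ S, P.coroot α β) - (∑ β ∈ X, P.coroot α β) = 2 * (k : ℝ) := by
  classical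
  -- abbreviations
  set c : Module.Dual ℝ V := P.coroot α with hc
  set sa : V → V := fun x => x - c x • α with hsa
  set quad : V → V → Prop := fun γ δ => γ = δ ∨ γ = -δ ∨ γ = θ δ ∨ γ = -θ δ with hquaddef
  -- basic facts
  have hSΔ : ∀ β ∈ S, β ∈ P.Δ ∧ θ β ≠ β ∧ θ β ≠ -β := fun β hβ =>
    (hScover β).mpr ⟨β, hβ, Or.inl rfl⟩
  have hcθ : ∀ x : V, c (θ x) = - c x := by
    intro x
    have h1 := hθpair x α hα
    rw [hreal, P.coroot_neg α hα] at h1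
    simp only [LinearMap.neg_apply] at h1
    linarith
  have hcs : ∀ x : V, c (sa x) = - c x := by
    intro x
    simp only [hsa, map_sub, map_smul, P.pairing_self α hα, smul_eq_mul, hc]
    ring
  have hss : ∀ x : V, sa (sa x) = x := by
    intro x
    have h2 := hcs x
    simp only [hsa] at h2 ⊢
    rw [h2]
    module
  have hsneg : ∀ x : V, sa (-x) = - sa x := by
    intro x
    simp only [hsa, map_neg]
    module
  have hsθ : ∀ x : V, θ (sa x) = sa (θ x) := by
    intro x
    simp only [hsa, map_sub, map_smul, hreal, hcθ]
    module
  have hsmem : ∀ γ ∈ P.Δ, sa γ ∈ P.Δ := fun γ hγ => P.reflect_mem α hα γ hγ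
  -- complex roots are stable under sa
  have hscx : ∀ β : V, (β ∈ P.Δ ∧ θ β ≠ β ∧ θ β ≠ -β) →
      (sa β ∈ P.Δ ∧ θ (sa β) ≠ sa β ∧ θ (sa β) ≠ -(sa β)) := by
    rintro β ⟨hβΔ, h1, h2⟩
    refine ⟨hsmem β hβΔ, ?_, ?_⟩
    · intro h
      rw [hsθ] at h
      apply h1
      have := congrArg sa h
      rwa [hss, hss] at this
    · intro h
      rw [hsθ, ← hsneg] at h
      apply h2
      have := congrArg sa h
      rwa [hss, hss] at this
  -- quad lemmas
  have hquad_symm : ∀ γ δ : V, quad γ δ → quad δ γ := by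
    intro γ δ h
    simp only [hquaddef] at h ⊢
    rcases h with rfl | rfl | rfl | rfl <;> simp [map_neg, hinv]
  have hquad_trans : ∀ γ δ ε : V, quad γ δ → quad δ ε → quad γ ε := by
    intro γ δ ε h1 h2
    simp only [hquaddef] at h1 h2 ⊢
    rcases h2 with rfl | rfl | rfl | rfl <;>
      rcases h1 with rfl | rfl | rfl | rfl <;>
      simp [map_neg, hinv]
  have hquad_s : ∀ γ δ : V, quad γ δ → quad (sa γ) (sa δ) := by
    intro γ δ h
    simp only [hquaddef] at h ⊢
    rcases h with rfl | rfl | rfl | rfl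
    · exact Or.inl rfl
    · exact Or.inr (Or.inl (hsneg δ))
    · exact Or.inr (Or.inr (Or.inl (hsθ δ).symm))
    · refine Or.inr (Or.inr (Or.inr ?_))
      rw [hsneg, hsθ]
  -- uniqueness of the representative
  have huniq : ∀ γ : V, ∀ b ∈ S, ∀ b' ∈ S, quad γ b → quad γ b' → b = b' := by
    intro γ b hb b' hb' h1 h2
    by_contra hne
    exact hSdisj b hb b' hb' hne γ h1 h2
  -- integer values of the pairing
  have hNex : ∃ N : V → ℤ, ∀ β ∈ P.Δ, c β = (N β : ℝ) := by
    refine ⟨fun β => if h : β ∈ P.Δ then (P.pairing_int β h α hα).choose else 0, fun β hβ => ?_⟩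
    beta_reduce
    rw [dif_pos hβ]
    exact (P.pairing_int β hβ α hα).choose_spec
  obtain ⟨N, hN⟩ := hNex
  -- membership in X in terms of N
  have hXS : X ⊆ S := fun β hβ => ((hX β).mp hβ).1
  have hoddN : ∀ β ∈ P.Δ, ((∃ n : ℤ, c β = 2 * (n : ℝ) + 1) ↔ ¬ (2 ∣ N β)) := by
    intro β hβ
    constructor
    · rintro ⟨n, hn⟩ ⟨m, hm⟩
      rw [hN β hβ, hm] at hn
      have : (2 * m : ℤ) = 2 * n + 1 := by exact_mod_cast hn
      omega
    · intro h
      refine ⟨(N β - 1) / 2, ?_⟩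
      have h2 : N β = 2 * ((N β - 1) / 2) + 1 := by omega
      rw [hN β hβ]
      exact_mod_cast congrArg (fun n : ℤ => (n : ℝ)) h2
  -- the main pairing construction
  have hmain : ∀ a, a ∈ S → ¬ (2 ∣ N a) → sa a ≠ θ a →
      ∃ b, b ∈ S ∧ ¬ (2 ∣ N b) ∧ sa b ≠ θ b ∧ b ≠ a ∧ quad (sa a) b := by
    intro a haS hodd hne
    obtain ⟨haΔ, hθ1, hθ2⟩ := hSΔ a haS
    obtain ⟨b, hbS, hq⟩ := (hScover (sa a)).mp (hscx a ⟨haΔ, hθ1, hθ2⟩)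
    have hq' : quad (sa a) b := hq
    obtain ⟨hbΔ, hbθ1, hbθ2⟩ := hSΔ b hbS
    -- N b = ± N a
    have hNb : N b = N a ∨ N b = - N a := by
      have hcsa : c (sa a) = -(N a : ℝ) := by rw [hcs a, hN a haΔ]
      rcases hq' with h | h | h | h
      · right
        have : c b = -(N a : ℝ) := by rw [← h]; exact hcsa
        rw [hN b hbΔ] at this
        exact_mod_cast this
      · left
        have : c (-b) = -(N a : ℝ) := by rw [← h]; exact hcsa
        rw [map_neg, hN b hbΔ] at this
        have : (N b : ℝ) = (N a : ℝ) := by linarith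
        exact_mod_cast this
      · left
        have : c (θ b) = -(N a : ℝ) := by rw [← h]; exact hcsa
        rw [hcθ, hN b hbΔ] at this
        have : (N b : ℝ) = (N a : ℝ) := by linarith
        exact_mod_cast this
      · right
        have : c (-θ b) = -(N a : ℝ) := by rw [← h]; exact hcsa
        rw [map_neg, hcθ, hN b hbΔ] at this
        have : (N b : ℝ) = -(N a : ℝ) := by linarith
        exact_mod_cast this
    have hoddb : ¬ (2 ∣ N b) := by rcases hNb with h | h <;> omega
    -- b ≠ a
    have hba : b ≠ a := by
      intro h
      subst h
      rcases hq' with h | h | h | h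
      · -- sa b = b forces N b = 0
        have h1 : c (sa b) = c b := congrArg c h
        rw [hcs, hN b hbΔ] at h1
        have : (N b : ℝ) = 0 := by linarith
        have : N b = 0 := by exact_mod_cast this
        omega
      · -- sa b = -b forces b = ± α
        have h' : b - c b • α = -b := h
        have h3 : (2 : ℝ) • b = c b • α := by
          have h9 : (2:ℝ) • b - c b • α = (b - c b • α) - (-b) := by module
          rw [h'] at h9
          simp only [sub_neg_eq_add, neg_add_cancel] at h9
          exact eq_of_sub_eq_zero h9
        have h1 : b = (c b / 2) • α := by
          have h10 : ((2:ℝ)/2) • b = ((c b)/2) • α := by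
            rw [div_eq_mul_inv, div_eq_mul_inv, mul_comm, mul_comm (c b), mul_smul, mul_smul, h3]
          simpa using h10
        have h4 : ((c b) / 2) • α ∈ P.Δ := h1 ▸ hbΔ
        rcases P.reduced α hα _ h4 with h5 | h5 <;> rw [h5] at h1
        · rw [one_smul] at h1
          exact hbθ2 (by rw [h1, hreal])
        · rw [neg_one_smul] at h1
          apply hbθ2
          rw [h1, map_neg, hreal, neg_neg]
      · exact hne h
      · -- sa b = -θ b forces N b = 0
        have h1 : c (sa b) = c (-θ b) := congrArg c h
        rw [hcs, map_neg, hcθ, hN b hbΔ] at h1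
        have : (N b : ℝ) = 0 := by linarith
        have : N b = 0 := by exact_mod_cast this
        omega
    -- sa b ≠ θ b
    have hbne : sa b ≠ θ b := by
      intro h
      -- quad a b, contradicting disjointness
      have h1 : quad a (sa b) := by
        have := hquad_s _ _ hq'
        rwa [hss] at this
      have h2 : quad (sa b) b := by
        rw [h]
        exact Or.inr (Or.inr (Or.inl rfl))
      have h3 : quad a b := hquad_trans _ _ _ h1 h2
      have h4 : quad a a := Or.inl rfl
      exact hSdisj a haS b hbS (Ne.symm hba) a h4 h3
    exact ⟨b, hbS, hoddb, hbne, hba, hq'⟩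
  -- the involution as a total function
  set F : V → V := fun a =>
    if h : a ∈ S ∧ ¬ (2 ∣ N a) ∧ sa a ≠ θ a then
      (hmain a h.1 h.2.1 h.2.2).choose else a with hF
  have hFspec : ∀ a (h : a ∈ S ∧ ¬ (2 ∣ N a) ∧ sa a ≠ θ a),
      F a ∈ S ∧ ¬ (2 ∣ N (F a)) ∧ sa (F a) ≠ θ (F a) ∧ F a ≠ a ∧ quad (sa a) (F a) := by
    intro a h
    have : F a = (hmain a h.1 h.2.1 h.2.2).choose := by rw [hF]; exact dif_pos h
    rw [this]
    exact (hmain a h.1 h.2.1 h.2.2).choose_spec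
  -- the subsum over S \ X is even
  have hT : 2 ∣ ∑ β ∈ S \ X, N β := by
    suffices h0 : ((∑ β ∈ S \ X, N β : ℤ) : ZMod 2) = 0 by
      have := (ZMod.intCast_zmod_eq_zero_iff_dvd _ 2).mp h0
      exact_mod_cast this
    push_cast
    rw [← Finset.sum_filter_add_sum_filter_not (S \ X) (fun β => ¬ (2 ∣ N β))
      (fun β => ((N β : ℤ) : ZMod 2))]
    have heven : ∑ β ∈ (S \ X).filter (fun β => ¬¬ (2 ∣ N β)), ((N β : ℤ) : ZMod 2) = 0 := by
      apply Finset.sum_eq_zero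
      intro β hβ
      rw [Finset.mem_filter, not_not] at hβ
      have : ((2:ℕ):ℤ) ∣ N β := by exact_mod_cast hβ.2
      exact (ZMod.intCast_zmod_eq_zero_iff_dvd _ 2).mpr this
    rw [heven, add_zero]
    -- conditions satisfied on the filtered set
    have hcond : ∀ a ∈ (S \ X).filter (fun β => ¬ (2 ∣ N β)),
        a ∈ S ∧ ¬ (2 ∣ N a) ∧ sa a ≠ θ a := by
      intro a ha
      rw [Finset.mem_filter, Finset.mem_sdiff] at ha
      obtain ⟨⟨haS, haX⟩, hodd⟩ := ha
      refine ⟨haS, hodd, ?_⟩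
      intro heq
      apply haX
      rw [hX]
      exact ⟨haS, heq, (hoddN a (hSΔ a haS).1).mpr hodd⟩
    apply Finset.sum_involution (fun a _ => F a)
    · intro a ha
      have h := hcond a ha
      have hs := hFspec a h
      -- both odd, so both casts are 1
      have hval : ∀ m : ℤ, ¬ (2 ∣ m) → ((m : ZMod 2) = 1) := by
        intro m hm
        have hdd : ((2:ℕ) : ℤ) ∣ (m - 1) := by push_cast; omega
        have h0 : ((m - 1 : ℤ) : ZMod 2) = 0 := (ZMod.intCast_zmod_eq_zero_iff_dvd _ 2).mpr hdd
        push_cast at h0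
        linear_combination h0
      rw [hval _ h.2.1, hval _ hs.2.1]
      decide
    · intro a ha _
      exact (hFspec a (hcond a ha)).2.2.2.1
    · intro a ha
      have h := hcond a ha
      have hs := hFspec a h
      rw [Finset.mem_filter, Finset.mem_sdiff]
      refine ⟨⟨hs.1, ?_⟩, hs.2.1⟩
      intro hmem
      exact hs.2.2.1 ((hX (F a)).mp hmem).2.1
    · intro a ha
      have h := hcond a ha
      have hs := hFspec a h
      have h' : F a ∈ S ∧ ¬ (2 ∣ N (F a)) ∧ sa (F a) ≠ θ (F a) := ⟨hs.1, hs.2.1, hs.2.2.1⟩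
      have hs' := hFspec (F a) h'
      -- quad (sa (F a)) a
      have hq1 : quad (F a) (sa a) := hquad_symm _ _ hs.2.2.2.2
      have hq2 : quad (sa (F a)) (sa (sa a)) := hquad_s _ _ hq1
      rw [hss] at hq2
      exact huniq (sa (F a)) (F (F a)) hs'.1 a h.1 hs'.2.2.2.2 hq2
  -- assemble
  obtain ⟨k, hk⟩ := hT
  refine ⟨k, ?_⟩
  have hsum : ∀ T : Finset V, T ⊆ S → ∑ β ∈ T, c β = ((∑ β ∈ T, N β : ℤ) : ℝ) := by
    intro T hTS
    push_cast
    exact Finset.sum_congr rfl fun β hβ => hN β (hSΔ β (hTS hβ)).1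
  have e1 : ∑ β ∈ S, c β = ((∑ β ∈ S, N β : ℤ) : ℝ) := hsum S le_rfl
  have e2 : ∑ β ∈ X, c β = ((∑ β ∈ X, N β : ℤ) : ℝ) := hsum X hXS
  have e3 : ∑ β ∈ S \ X, N β = ∑ β ∈ S, N β - ∑ β ∈ X, N β := by
    rw [← Finset.sum_sdiff hXS]
    ring
  rw [e1, e2]
  rw [e3] at hk
  have : ((∑ β ∈ S, N β : ℤ) : ℝ) - ((∑ β ∈ X, N β : ℤ) : ℝ) = ((2 * k : ℤ) : ℝ) := by
    rw [← hk]
    push_cast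
    ring
  rw [this]
  push_cast
  ring
end
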